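/- arXiv:2103.08277 — 8 statements merged into one kernel-verified Lean document; each statement's English description precedes it below -/
import Mathlib

section
/- Every boolean function can be exactly represented by an MPS with boolean kernel: for every n ≥ 2 and every f : {0,1}ⁿ → {0,1}, setting m = |{X ∈ {0,1}ⁿ : f(X) = 1}|, there exist boundary tensors A₁, Aₙ : {0,1} → ℝᵐ with entries in {0,1} and, for 1 < i < n, interior tensors A_i : {0,1} → Matrix ℝ (m, m) taking values in diagonal matrices with entries in {0,1}, such that Σ_{s ∈ {0,1}ⁿ} (A₁^{s₁})ᵀ ⬝ A₂^{s₂} ⬝ ⋯ ⬝ A_{n−1}^{s_{n−1}} ⬝ Aₙ^{sₙ} · ∏_{i=1}^{n} φ^{s_i}(X_i) = f(X) for all X ∈ {0,1}ⁿ. In particular the bond dimension m is at most 2ⁿ. -/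
/-- The site kernel maps of the boolean MPS kernel: `φ⁰(X) = X`, `φ¹(X) = 1 - X`. -/
noncomputable def phiB (s : Bool) (x : ℝ) : ℝ := if s then 1 - x else x

/-- Boolean values `0, 1` regarded as real numbers. -/
noncomputable def b2r (b : Bool) : ℝ := if b then 1 else 0

/-- every boolean function `f : {0,1}ⁿ → {0,1}` (`n ≥ 2`) is exactly
represented by an open-boundary MPS with boolean kernel of bond dimension
`m = |{X : f X = 1}| ≤ 2ⁿ`: there are boundary tensors `B₁, Bₙ : Bool → ℝᵐ` with entries
in `{0,1}` and interior tensors `D i : Bool → Matrix ℝ m m` which are diagonal with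
entries in `{0,1}`, such that
`Σ_s (B₁^{s₁})ᵀ ⬝ D₂^{s₂} ⬝ ⋯ ⬝ D_{n-1}^{s_{n-1}} ⬝ Bₙ^{sₙ} ∏ᵢ φ^{sᵢ}(Xᵢ) = f(X)`
(how: the matrix chain with diagonal interior factors is written out as the explicit
sum over the single bond index `α`). -/
theorem mps_represents_arbitrary_boolean_function (n : ℕ) (hn : 2 ≤ n)
    (f : (Fin n → Bool) → Bool) :
    ∃ m : ℕ,
      m = (Finset.univ.filter fun X : Fin n → Bool => f X = true).card ∧
      m ≤ 2 ^ n ∧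
      ∃ (B₁ Bₙ : Bool → Fin m → ℝ) (D : Fin n → Bool → Matrix (Fin m) (Fin m) ℝ),
        (∀ s α, B₁ s α = 0 ∨ B₁ s α = 1) ∧
        (∀ s α, Bₙ s α = 0 ∨ Bₙ s α = 1) ∧
        (∀ i s α β, α ≠ β → D i s α β = 0) ∧
        (∀ i s α, D i s α α = 0 ∨ D i s α α = 1) ∧
        ∀ X : Fin n → Bool,
          (∑ s : Fin n → Bool, (∑ α : Fin m,
              B₁ (s ⟨0, by omega⟩) α *
              (∏ i ∈ Finset.univ.filter fun i : Fin n => (i : ℕ) ≠ 0 ∧ (i : ℕ) ≠ n - 1,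
                D i (s i) α α) *
              Bₙ (s ⟨n - 1, by omega⟩) α) *
            ∏ i, phiB (s i) (b2r (X i)))
            = b2r (f X) := by
  classical
  set S := Finset.univ.filter fun X : Fin n → Bool => f X = true with hS
  refine ⟨S.card, rfl, ?_, ?_⟩
  · calc S.card ≤ (Finset.univ : Finset (Fin n → Bool)).card := Finset.card_filter_le _ _
      _ = 2 ^ n := by simp
  let e := S.equivFin
  let Y : Fin S.card → (Fin n → Bool) := fun α => (e.symm α : _)
  have hYmem : ∀ α, f (Y α) = true := fun α => by
    exact (Finset.mem_filter.mp (e.symm α).2).2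
  have hYinj : Function.Injective Y := fun a b h => by
    apply e.symm.injective; exact Subtype.ext h
  have hYsurj : ∀ X, f X = true → ∃ α, Y α = X := fun X hX =>
    ⟨e ⟨X, by simp [S, Finset.mem_filter, hX]⟩, by simp [Y]⟩
  let g : Fin S.card → Fin n → Bool → ℝ := fun α i s => if s = !(Y α i) then 1 else 0
  refine ⟨fun s α => g α ⟨0, by omega⟩ s, fun s α => g α ⟨n-1, by omega⟩ s,
    fun i s => Matrix.of fun a b => if a = b then g a i s else 0,
    fun s α => by by_cases h : s = !(Y α ⟨0, by omega⟩) <;> simp [g, h],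
    fun s α => by by_cases h : s = !(Y α ⟨n-1, by omega⟩) <;> simp [g, h],
    fun i s α β hab => by simp [Matrix.of_apply, hab],
    fun i s α => by by_cases h : s = !(Y α i) <;> simp [Matrix.of_apply, g, h],
    ?_⟩
  intro X
  have h0 : (⟨0, by omega⟩ : Fin n) ≠ ⟨n-1, by omega⟩ := by
    intro h; have := congrArg Fin.val h; simp at this; omega
  have huniv : (Finset.univ : Finset (Fin n)) =
      insert ⟨0, by omega⟩ (insert ⟨n-1, by omega⟩
        (Finset.univ.filter fun i : Fin n => (i : ℕ) ≠ 0 ∧ (i : ℕ) ≠ n - 1)) := by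
    ext i
    simp [Finset.mem_insert, Fin.ext_iff]
    try omega
  have h0mem : (⟨0, by omega⟩ : Fin n) ∉ insert (⟨n-1, by omega⟩ : Fin n)
      (Finset.univ.filter fun i : Fin n => (i : ℕ) ≠ 0 ∧ (i : ℕ) ≠ n - 1) := by
    simp [Finset.mem_insert, Fin.ext_iff]
    try omega
  have hnmem : (⟨n-1, by omega⟩ : Fin n) ∉
      (Finset.univ.filter fun i : Fin n => (i : ℕ) ≠ 0 ∧ (i : ℕ) ≠ n - 1) := by
    simp [Fin.ext_iff]
    try omega
  have hprod : ∀ (α : Fin S.card) (s : Fin n → Bool),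
      g α ⟨0, by omega⟩ (s ⟨0, by omega⟩) *
      (∏ i ∈ Finset.univ.filter fun i : Fin n => (i : ℕ) ≠ 0 ∧ (i : ℕ) ≠ n - 1,
        (Matrix.of fun a b => if a = b then g a i (s i) else 0 : Matrix (Fin S.card) (Fin S.card) ℝ) α α) *
      g α ⟨n-1, by omega⟩ (s ⟨n-1, by omega⟩) = ∏ i, g α i (s i) := by
    intro α s
    have : ∀ i ∈ Finset.univ.filter fun i : Fin n => (i : ℕ) ≠ 0 ∧ (i : ℕ) ≠ n - 1,
        (Matrix.of fun a b => if a = b then g a i (s i) else 0 : Matrix (Fin S.card) (Fin S.card) ℝ) α α = g α i (s i) := by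
      intro i _; simp [Matrix.of_apply]
    rw [Finset.prod_congr rfl this]
    conv_rhs => rw [huniv]
    rw [Finset.prod_insert h0mem, Finset.prod_insert hnmem]
    ring
  calc (∑ s : Fin n → Bool, (∑ α : Fin S.card,
          g α ⟨0, by omega⟩ (s ⟨0, by omega⟩) *
          (∏ i ∈ Finset.univ.filter fun i : Fin n => (i : ℕ) ≠ 0 ∧ (i : ℕ) ≠ n - 1,
            (Matrix.of fun a b => if a = b then g a i (s i) else 0 : Matrix (Fin S.card) (Fin S.card) ℝ) α α) *
          g α ⟨n-1, by omega⟩ (s ⟨n-1, by omega⟩)) *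
        ∏ i, phiB (s i) (b2r (X i)))
      = ∑ α : Fin S.card, ∑ s : Fin n → Bool,
          ∏ i, (g α i (s i) * phiB (s i) (b2r (X i))) := by
        simp_rw [Finset.sum_mul]
        rw [Finset.sum_comm]
        refine Finset.sum_congr rfl fun α _ => Finset.sum_congr rfl fun s _ => ?_
        rw [hprod α s, ← Finset.prod_mul_distrib]
      _ = ∑ α : Fin S.card, ∏ i, ∑ b : Bool, g α i b * phiB b (b2r (X i)) := by
        refine Finset.sum_congr rfl fun α _ => ?_
        rw [Finset.prod_univ_sum]
        refine Finset.sum_congr ?_ fun _ _ => rfl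
        ext x; simp
      _ = ∑ α : Fin S.card, ∏ i, (if X i = Y α i then (1:ℝ) else 0) := by
        refine Finset.sum_congr rfl fun α _ => Finset.prod_congr rfl fun i _ => ?_
        simp only [Fintype.sum_bool, g]
        cases hb : Y α i <;> cases hx : X i <;> simp [phiB, b2r, hb, hx]
      _ = ∑ α : Fin S.card, (if X = Y α then (1:ℝ) else 0) := by
        refine Finset.sum_congr rfl fun α _ => ?_
        rw [Finset.prod_boole]
        by_cases h : X = Y α
        · simp [h]
        · have hne : ¬ ∀ i ∈ Finset.univ, X i = Y α i := by
            intro hall; exact h (funext fun i => hall i (Finset.mem_univ i))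
          rw [if_neg hne, if_neg h]
      _ = b2r (f X) := by
        by_cases hf : f X = true
        · obtain ⟨α₀, hα₀⟩ := hYsurj X hf
          rw [Finset.sum_eq_single α₀]
          · simp [hα₀, b2r, hf]
          · intro β _ hβ
            have hne : X ≠ Y β := fun h => hβ (hYinj (hα₀.trans h)).symm
            rw [if_neg hne]
          · simp
        · have : ∀ α, X ≠ Y α := fun α h => hf (h ▸ hYmem α)
          simp [this, b2r, hf]
end

section
/- For every n ≥ 1 and every 0 ≤ l ≤ n, there exists an MPS with boolean kernel on n inputs that represents the universal OR gate f(X) = (∨_{i=1}^{l} X_i) ∨ (∨_{j=l+1}^{n} ¬X_j), i.e., f(X) = 1 unless X_i = 0 for all i ≤ l and X_j = 1 for all j > l. -/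
/-- The cyclic successor `i ↦ i + 1` on `Fin n`. -/
def cyc {n : ℕ} (i : Fin n) : Fin n := ⟨(i.val + 1) % n, Nat.mod_lt _ i.pos⟩

/-- The value of an MPS with boolean kernel, bond dimensions `m i` and tensors
`A i : Bool → Matrix ℝ (m i) (m (i+1))` (cyclic) on real inputs `X`:
`Ψ(X) = Σ_s trace(A₁^{s₁} ⬝ ⋯ ⬝ Aₙ^{sₙ}) ∏ᵢ φ^{sᵢ}(Xᵢ)`, the trace of the matrix chain
being written out as a sum over all bond indices `α`. -/
noncomputable def mpsBoolVal {n : ℕ} (m : Fin n → ℕ)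
    (A : (i : Fin n) → Bool → Fin (m i) → Fin (m (cyc i)) → ℝ)
    (X : Fin n → ℝ) : ℝ :=
  ∑ s : Fin n → Bool, ∑ α : (i : Fin n) → Fin (m i),
    (∏ i, A i (s i) (α i) (α (cyc i))) * ∏ i, phiB (s i) (X i)

/-- for every `n ≥ 1` and `0 ≤ l ≤ n` there is an MPS with boolean kernel on
`n` inputs representing the universal OR gate
`f(X) = (∨_{i ≤ l} Xᵢ) ∨ (∨_{j > l} ¬Xⱼ)`, i.e. `f(X) = 1` unless `Xᵢ = 0` for all
`i ≤ l` and `Xⱼ = 1` for all `j > l` (indices are `0`-based, so `i ≤ l` becomes `i < l`). -/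
theorem mps_represents_universal_or_gate (n l : ℕ) (hn : 1 ≤ n) (hl : l ≤ n) :
    ∃ (m : Fin n → ℕ) (A : (i : Fin n) → Bool → Fin (m i) → Fin (m (cyc i)) → ℝ),
      ∀ X : Fin n → Bool,
        mpsBoolVal m A (fun i => b2r (X i))
          = b2r (!decide ((∀ i : Fin n, (i : ℕ) < l → X i = false) ∧
                          (∀ i : Fin n, l ≤ (i : ℕ) → X i = true))) := by
  classical
  set ε : Fin n → ℝ := fun i => if i = ⟨0, hn⟩ then -1 else 1 with hε
  set g : Fin n → Bool → ℝ := fun i b => if decide (i.val < l) = b then 1 else 0 with hg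
  set d : Fin n → Bool → Fin 2 → ℝ := fun i b c => if c.val = 0 then 1 else ε i * g i b with hd
  set A : (i : Fin n) → Bool → Fin 2 → Fin 2 → ℝ :=
    fun i b a c => if a = c then d i b a else 0 with hA
  refine ⟨fun _ => 2, A, ?_⟩
  intro X
  -- Step 1: factorize the sum over s
  have key : mpsBoolVal (fun _ => 2) A (fun i => b2r (X i))
      = ∑ α : Fin n → Fin 2, ∏ i, A i (!X i) (α i) (α (cyc i)) := by
    unfold mpsBoolVal
    rw [Finset.sum_comm]
    refine Finset.sum_congr rfl fun α _ => ?_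
    have h1 : ∀ s : Fin n → Bool,
        (∏ i, A i (s i) (α i) (α (cyc i))) * ∏ i, phiB (s i) (b2r (X i))
          = ∏ i, (A i (s i) (α i) (α (cyc i)) * phiB (s i) (b2r (X i))) :=
      fun s => (Finset.prod_mul_distrib).symm
    simp_rw [h1]
    rw [← Fintype.piFinset_univ,
      ← Finset.prod_univ_sum (fun _ : Fin n => (Finset.univ : Finset Bool))
        (fun i b => A i b (α i) (α (cyc i)) * phiB b (b2r (X i)))]
    refine Finset.prod_congr rfl fun i _ => ?_
    rw [Fintype.sum_bool]
    cases hx : X i <;> simp [phiB, b2r]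
  rw [key]
  -- Step 2: only constant α contribute
  have step2 : (∑ α : Fin n → Fin 2, ∏ i, A i (!X i) (α i) (α (cyc i)))
      = ∑ c : Fin 2, ∏ i, d i (!X i) c := by
    have hsub : (Finset.univ.image (fun c : Fin 2 => (fun _ => c : Fin n → Fin 2)))
        ⊆ Finset.univ := Finset.subset_univ _
    rw [← Finset.sum_subset hsub ?_]
    · rw [Finset.sum_image ?_]
      · refine Finset.sum_congr rfl fun c _ => ?_
        refine Finset.prod_congr rfl fun i _ => ?_
        simp [hA]
      · intro x _ y _ hxy
        exact congrFun hxy ⟨0, hn⟩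
    · intro α _ hα
      by_contra h
      apply hα
      have hc : ∀ i, α i = α (cyc i) := by
        intro i
        by_contra hne
        apply h
        apply Finset.prod_eq_zero (Finset.mem_univ i)
        simp [hA, hne]
      have hconst : ∀ k (hk : k < n), α ⟨k, hk⟩ = α ⟨0, hn⟩ := by
        intro k
        induction k with
        | zero => intro hk; rfl
        | succ k ih =>
          intro hk
          have hk' : k < n := Nat.lt_of_succ_lt hk
          have hcy : (⟨k+1, hk⟩ : Fin n) = cyc ⟨k, hk'⟩ := by
            simp [cyc, Nat.mod_eq_of_lt hk]
          rw [hcy, ← hc ⟨k, hk'⟩, ih hk']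
      refine Finset.mem_image.mpr ⟨α ⟨0, hn⟩, Finset.mem_univ _, ?_⟩
      funext i
      obtain ⟨k, hk⟩ := i
      exact (hconst k hk).symm
  rw [step2, Fin.sum_univ_two]
  have h0 : (∏ i, d i (!X i) 0) = 1 := by
    refine Finset.prod_eq_one fun i _ => ?_
    simp [hd]
  have h1 : (∏ i, d i (!X i) 1) = (∏ i, ε i) * (∏ i, g i (!X i)) := by
    rw [← Finset.prod_mul_distrib]
    refine Finset.prod_congr rfl fun i _ => ?_
    simp [hd]
  have heps : (∏ i, ε i) = -1 := by
    have hre : (∏ i, ε i) = ∏ i : Fin n, if i = ⟨0, hn⟩ then (-1:ℝ) else 1 := rfl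
    rw [hre, Finset.prod_ite_eq' Finset.univ (⟨0, hn⟩ : Fin n) (fun _ => (-1:ℝ))]
    simp
  have hgprod : (∏ i, g i (!X i))
      = if (∀ i : Fin n, decide (i.val < l) = !X i) then (1:ℝ) else 0 := by
    rw [hg]
    simp only []
    rw [Finset.prod_boole]
    simp
  rw [h0, h1, heps, hgprod]
  have hiff : (∀ i : Fin n, decide (i.val < l) = !X i) ↔
      ((∀ i : Fin n, (i : ℕ) < l → X i = false) ∧
       (∀ i : Fin n, l ≤ (i : ℕ) → X i = true)) := by
    constructor
    · intro h
      constructor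
      · intro i hi
        have := h i
        simp [hi] at this
        simpa using this.symm
      · intro i hi
        have := h i
        simp [Nat.not_lt_of_le hi] at this
        simpa using this.symm
    · intro ⟨h1, h2⟩ i
      by_cases hi : i.val < l
      · simp [hi, h1 i hi]
      · simp [hi, h2 i (Nat.le_of_not_lt hi)]
  by_cases hQ : (∀ i : Fin n, (i : ℕ) < l → X i = false) ∧
       (∀ i : Fin n, l ≤ (i : ℕ) → X i = true)
  · rw [if_pos (hiff.mpr hQ), decide_eq_true hQ]
    norm_num [b2r]
  · rw [if_neg (fun h => hQ (hiff.mp h)), decide_eq_false hQ]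
    norm_num [b2r]
end

section
/- For every n ≥ 1, there exists an MPS with boolean kernel on n inputs that represents the n-input parity function, i.e., the boolean function f with f(X) = 1 if the number of indices i with X_i = 1 is odd, and f(X) = 0 otherwise. -/
lemma cyc_const {n : ℕ} (hn : 0 < n) {γ : Type*} (α : Fin n → γ)
    (h : ∀ i, α i = α (cyc i)) (i : Fin n) : α i = α ⟨0, hn⟩ := by
  have key : ∀ k : ℕ, α ⟨k % n, Nat.mod_lt _ hn⟩ = α ⟨0, hn⟩ := by
    intro k
    induction k with
    | zero => exact congrArg α (Fin.ext (Nat.zero_mod n))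
    | succ k ih =>
      have hc : (⟨(k+1) % n, Nat.mod_lt _ hn⟩ : Fin n)
          = cyc ⟨k % n, Nat.mod_lt _ hn⟩ := by
        simp [cyc, Nat.mod_add_mod]
      rw [hc, ← h, ih]
  have hi : i = ⟨i.val % n, Nat.mod_lt _ hn⟩ := Fin.ext (Nat.mod_eq_of_lt i.isLt).symm
  rw [hi]; exact key i.val

lemma mpsBoolVal_diag {n : ℕ} (hn : 0 < n) (d : Fin n → Bool → Fin 2 → ℝ)
    (X : Fin n → ℝ) :
    mpsBoolVal (fun _ => 2)
      (fun i s α β => if (α : ℕ) = (β : ℕ) then d i s α else 0) X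
    = ∑ s : Fin n → Bool, (∑ c : Fin 2, ∏ i, d i (s i) c) * ∏ i, phiB (s i) (X i) := by
  unfold mpsBoolVal
  refine Finset.sum_congr rfl fun s _ => ?_
  rw [← Finset.sum_mul]
  congr 1
  have h2 : ∀ α : (i : Fin n) → Fin 2,
      (∏ i, if ((α i : ℕ)) = ((α (cyc i) : ℕ)) then d i (s i) (α i) else 0)
      = if (∀ i, α i = α (cyc i)) then ∏ i, d i (s i) (α i) else 0 := by
    intro α
    by_cases h : ∀ i, α i = α (cyc i)
    · rw [if_pos h]
      exact Finset.prod_congr rfl fun i _ => by rw [if_pos (congrArg Fin.val (h i))]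
    · rw [if_neg h]
      push_neg at h
      obtain ⟨j, hj⟩ := h
      exact Finset.prod_eq_zero (Finset.mem_univ j)
        (if_neg fun hc => hj (Fin.ext hc))
  calc (∑ α : (i : Fin n) → Fin 2,
          ∏ i, if ((α i : ℕ)) = ((α (cyc i) : ℕ)) then d i (s i) (α i) else 0)
      = ∑ α : (i : Fin n) → Fin 2,
          if (∀ i, α i = α (cyc i)) then ∏ i, d i (s i) (α i) else 0 :=
        Finset.sum_congr rfl fun α _ => h2 α
    _ = ∑ α : (i : Fin n) → Fin 2, ∑ c : Fin 2,
          if α = (fun _ => c) then ∏ i, d i (s i) (α i) else 0 := by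
        refine Finset.sum_congr rfl fun α _ => ?_
        by_cases h : ∀ i, α i = α (cyc i)
        · have hc := cyc_const hn α h
          rw [if_pos h]
          have : ∀ c : Fin 2, (α = fun _ => c) ↔ c = α ⟨0, hn⟩ := by
            intro c
            constructor
            · intro hh; exact (congrFun hh ⟨0, hn⟩).symm
            · intro hh; funext i; rw [hc i, ← hh]
          rw [Finset.sum_congr rfl fun c _ => if_congr (this c) rfl rfl,
            Finset.sum_ite_eq' Finset.univ (α ⟨0, hn⟩)
              (fun _ => ∏ i, d i (s i) (α i)), if_pos (Finset.mem_univ _)]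
        · rw [if_neg h]
          refine (Finset.sum_eq_zero fun c _ => if_neg fun hh => h fun i => ?_).symm
          rw [hh]
    _ = ∑ c : Fin 2, ∑ α : (i : Fin n) → Fin 2,
          if α = (fun _ => c) then ∏ i, d i (s i) (α i) else 0 := Finset.sum_comm
    _ = ∑ c : Fin 2, ∏ i, d i (s i) c := by
        refine Finset.sum_congr rfl fun c _ => ?_
        rw [Finset.sum_ite_eq' Finset.univ (fun _ => c)
          (fun α => ∏ i, d i (s i) (α i)), if_pos (Finset.mem_univ _)]

/-- for every `n ≥ 1` there is an MPS with boolean kernel on `n` inputs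
representing the `n`-input parity function (`1` iff the number of inputs equal to `1`
is odd). -/
theorem mps_represents_parity_gate (n : ℕ) (hn : 1 ≤ n) :
    ∃ (m : Fin n → ℕ) (A : (i : Fin n) → Bool → Fin (m i) → Fin (m (cyc i)) → ℝ),
      ∀ X : Fin n → Bool,
        mpsBoolVal m A (fun i => b2r (X i))
          = if Odd (Finset.univ.filter fun i : Fin n => X i = true).card
            then 1 else 0 := by
  classical
  set d : Fin n → Bool → Fin 2 → ℝ := fun i s c =>
    (if i = (⟨0, hn⟩ : Fin n) then (if (c : ℕ) = 0 then (1:ℝ)/2 else -(1/2)) else 1) *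
    (if (c : ℕ) = 0 then 1 else (if s then 1 else -1)) with hd
  refine ⟨fun _ => 2,
    fun i s α β => if (α : ℕ) = (β : ℕ) then d i s α else 0, fun X => ?_⟩
  rw [mpsBoolVal_diag hn d]
  -- collapse the sum over s via the indicator product
  have hphi : ∀ s : Fin n → Bool, (∏ i, phiB (s i) (b2r (X i)))
      = if s = (fun i => !X i) then 1 else 0 := by
    intro s
    have h1 : ∀ i, phiB (s i) (b2r (X i)) = if s i = !X i then (1:ℝ) else 0 := by
      intro i; cases h1 : s i <;> cases h2 : X i <;> simp [phiB, b2r]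
    rw [Finset.prod_congr rfl fun i _ => h1 i, Finset.prod_boole]
    by_cases hs : s = fun i => !X i
    · rw [if_pos fun i _ => congrFun hs i, if_pos hs]
    · rw [if_neg fun hforall => hs (funext fun i => hforall i (Finset.mem_univ i)),
        if_neg hs]
  rw [Finset.sum_congr rfl fun s _ => by rw [hphi s]]
  rw [Finset.sum_congr rfl fun s (_ : s ∈ Finset.univ) =>
    (mul_ite _ _ (1:ℝ) 0).trans (by rw [mul_one, mul_zero]),
    Finset.sum_ite_eq' Finset.univ (fun i => !X i)
      (fun s => ∑ c : Fin 2, ∏ i, d i (s i) c), if_pos (Finset.mem_univ _)]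
  -- now compute ∑ c, ∏ i, d i (!X i) c
  rw [Fin.sum_univ_two]
  have hc0 : (∏ i, d i (!X i) 0) = 1/2 := by
    have h0 : ∀ i : Fin n, d i (!X i) 0 = if i = (⟨0, hn⟩ : Fin n) then (1:ℝ)/2 else 1 := by
      intro i; simp [hd]
    rw [Finset.prod_congr rfl fun i _ => h0 i,
      Finset.prod_ite_eq' Finset.univ (⟨0, hn⟩ : Fin n) (fun _ => (1:ℝ)/2),
      if_pos (Finset.mem_univ _)]
  have hc1 : (∏ i, d i (!X i) 1)
      = -(1/2) * (-1) ^ (Finset.univ.filter fun i : Fin n => X i = true).card := by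
    have h1 : ∀ i : Fin n, d i (!X i) 1
        = (if i = (⟨0, hn⟩ : Fin n) then -((1:ℝ)/2) else 1) * (if X i = true then -1 else 1) := by
      intro i; cases h : X i <;> simp [hd]
    rw [Finset.prod_congr rfl fun i _ => h1 i, Finset.prod_mul_distrib,
      Finset.prod_ite_eq' Finset.univ (⟨0, hn⟩ : Fin n) (fun _ => -((1:ℝ)/2)),
      if_pos (Finset.mem_univ _)]
    rw [Finset.prod_ite, Finset.prod_const, Finset.prod_const, one_pow, mul_one]
  rw [hc0, hc1]
  by_cases hodd : Odd (Finset.univ.filter fun i : Fin n => X i = true).card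
  · rw [if_pos hodd, hodd.neg_one_pow]; norm_num
  · rw [if_neg hodd, (Nat.not_odd_iff_even.mp hodd).neg_one_pow]; norm_num
end

section
/- For every n ≥ 1 and every 0 ≤ k ≤ n, there exists an MPS with boolean kernel on n inputs that represents the threshold gate Thⁿ_k, i.e., the boolean function f with f(X) = 1 if Σ_{i=1}^{n} X_i ≥ k and f(X) = 0 otherwise. -/
/-- for every `n ≥ 1` and `0 ≤ k ≤ n` there is an MPS with boolean kernel on
`n` inputs representing the threshold gate `Thⁿ_k`, whose value is `1` iff at least `k`
of the inputs equal `1`. -/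
theorem mps_represents_threshold_gate (n k : ℕ) (hn : 1 ≤ n) (hk : k ≤ n) :
    ∃ (m : Fin n → ℕ) (A : (i : Fin n) → Bool → Fin (m i) → Fin (m (cyc i)) → ℝ),
      ∀ X : Fin n → Bool,
        mpsBoolVal m A (fun i => b2r (X i))
          = if k ≤ (Finset.univ.filter fun i : Fin n => X i = true).card
            then 1 else 0 := by
  classical
  have hpos : 0 < n := hn
  set i0 : Fin n := ⟨0, hpos⟩ with hi0
  obtain ⟨e⟩ : Nonempty (Fin (2 ^ n) ≃ (Fin n → Bool)) :=
    ⟨(Fintype.equivFinOfCardEq (by simp)).symm⟩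
  set thr : (Fin n → Bool) → ℝ :=
    fun Y => if k ≤ (Finset.univ.filter fun i : Fin n => Y i = true).card then 1 else 0 with hthr
  refine ⟨fun _ => 2 ^ n,
    fun i b g g' => if g = g' ∧ e g i = !b then (if i = i0 then thr (e g) else 1) else 0, ?_⟩
  intro X
  show (∑ s : Fin n → Bool, ∑ α : (i : Fin n) → Fin (2 ^ n),
      (∏ i, (if α i = α (cyc i) ∧ e (α i) i = !(s i) then
          (if i = i0 then thr (e (α i)) else 1) else 0)) *
        ∏ i, phiB (s i) (b2r (X i))) = thr X
  have hphi : ∀ s : Fin n → Bool,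
      (∏ i, phiB (s i) (b2r (X i))) = if s = (fun i => !X i) then (1 : ℝ) else 0 := by
    intro s
    have h1 : ∀ i, phiB (s i) (b2r (X i)) = if s i = !X i then (1 : ℝ) else 0 := by
      intro i; cases hs : s i <;> cases hx : X i <;> simp [phiB, b2r]
    rw [Finset.prod_congr rfl fun i _ => h1 i, Fintype.prod_boole]
    simp [funext_iff]
  -- collapse the sum over s
  have step1 : (∑ s : Fin n → Bool, ∑ α : (i : Fin n) → Fin (2 ^ n),
      (∏ i, (if α i = α (cyc i) ∧ e (α i) i = !(s i) then
          (if i = i0 then thr (e (α i)) else 1) else 0)) *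
        ∏ i, phiB (s i) (b2r (X i)))
      = ∑ α : (i : Fin n) → Fin (2 ^ n),
          ∏ i, (if α i = α (cyc i) ∧ e (α i) i = X i then
            (if i = i0 then thr (e (α i)) else 1) else 0) := by
    have : ∀ s : Fin n → Bool,
        (∑ α : (i : Fin n) → Fin (2 ^ n),
          (∏ i, (if α i = α (cyc i) ∧ e (α i) i = !(s i) then
              (if i = i0 then thr (e (α i)) else 1) else 0)) *
            ∏ i, phiB (s i) (b2r (X i)))
        = if s = (fun i => !X i) then
            (∑ α : (i : Fin n) → Fin (2 ^ n),
              ∏ i, (if α i = α (cyc i) ∧ e (α i) i = !(s i) then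
                (if i = i0 then thr (e (α i)) else 1) else 0)) else 0 := by
      intro s
      rw [← Finset.sum_mul, hphi s, mul_ite, mul_one, mul_zero]
    rw [Finset.sum_congr rfl fun s _ => this s, Finset.sum_ite_eq' Finset.univ]
    simp [Bool.not_not]
  rw [step1]
  -- now compute the sum over α
  set α0 : (i : Fin n) → Fin (2 ^ n) := fun _ => e.symm X with hα0
  have hconst : ∀ (α : (i : Fin n) → Fin (2 ^ n)),
      (∀ i, α i = α (cyc i)) → ∀ i, α i = α i0 := by
    intro α hα i
    obtain ⟨v, hv⟩ := i
    induction v with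
    | zero => rfl
    | succ w ih =>
        have hw : w < n := Nat.lt_of_succ_lt hv
        have h1 : cyc ⟨w, hw⟩ = ⟨w + 1, hv⟩ := by
          simp [cyc, Nat.mod_eq_of_lt hv]
        calc α ⟨w + 1, hv⟩ = α (cyc ⟨w, hw⟩) := by rw [h1]
          _ = α ⟨w, hw⟩ := (hα ⟨w, hw⟩).symm
          _ = α i0 := ih hw
  have hcond : ∀ (α : (i : Fin n) → Fin (2 ^ n)),
      (∀ i, α i = α (cyc i) ∧ e (α i) i = X i) ↔ α = α0 := by
    intro α
    constructor
    · intro h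
      have hc : ∀ i, α i = α i0 := hconst α fun i => (h i).1
      have hex : e (α i0) = X := by
        funext i
        rw [← hc i]; exact (h i).2
      have : α i0 = e.symm X := by
        rw [← hex, Equiv.symm_apply_apply]
      funext i
      rw [hc i, this]
    · intro h
      subst h
      intro i
      refine ⟨rfl, ?_⟩
      simp [hα0]
  have hprod : ∀ (α : (i : Fin n) → Fin (2 ^ n)),
      (∏ i, (if α i = α (cyc i) ∧ e (α i) i = X i then
        (if i = i0 then thr (e (α i)) else 1) else 0))
      = if α = α0 then (∏ i, (if i = i0 then thr (e (α i)) else 1)) else 0 := by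
    intro α
    by_cases h : α = α0
    · rw [if_pos h]
      exact Finset.prod_congr rfl fun i _ => if_pos ((hcond α).mpr h i)
    · rw [if_neg h]
      have h2 : ¬ ∀ i, α i = α (cyc i) ∧ e (α i) i = X i := fun hh => h ((hcond α).mp hh)
      obtain ⟨i, hi⟩ := not_forall.mp h2
      exact Finset.prod_eq_zero (Finset.mem_univ i) (if_neg hi)
  rw [Finset.sum_congr rfl fun α _ => hprod α, Finset.sum_ite_eq' Finset.univ]
  simp [hα0, Finset.prod_ite_eq' Finset.univ i0 (fun _ => thr X)]
end

section
/- The explicit bond-dimension-4 MPS with boolean kernel given by A₁⁰ = (1,0,0,1), A₁¹ = (0,1,1,0), A₂⁰ = diag(0,1,0,1), A₂¹ = diag(1,0,1,0), A₃⁰ = (0,0,1,1), A₃¹ = (1,1,0,0) represents the 3-input parity gate: Σ_{s ∈ {0,1}³} Σ_{α=1}^{4} (A₁^{s₁})_α (A₂^{s₂})_{αα} (A₃^{s₃})_α · φ^{s₁}(X₁) φ^{s₂}(X₂) φ^{s₃}(X₃) equals 1 if an odd number of X₁, X₂, X₃ equal 1 and 0 otherwise, for all X₁, X₂, X₃ ∈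 {0,1}. -/
/-- the explicit bond-dimension-`4` MPS with boolean kernel given by
`A₁⁰ = (1,0,0,1)`, `A₁¹ = (0,1,1,0)`, `A₂⁰ = diag(0,1,0,1)`, `A₂¹ = diag(1,0,1,0)`,
`A₃⁰ = (0,0,1,1)`, `A₃¹ = (1,1,0,0)` represents the 3-input parity gate
(value `1` iff an odd number of the inputs equal `1`). -/
theorem explicit_mps_represents_three_input_parity :
    ∃ (A₁ A₃ : Bool → Fin 4 → ℝ) (A₂ : Bool → Matrix (Fin 4) (Fin 4) ℝ),
      A₁ false = ![1, 0, 0, 1] ∧ A₁ true = ![0, 1, 1, 0] ∧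
      A₂ false = Matrix.diagonal ![0, 1, 0, 1] ∧
      A₂ true = Matrix.diagonal ![1, 0, 1, 0] ∧
      A₃ false = ![0, 0, 1, 1] ∧ A₃ true = ![1, 1, 0, 0] ∧
      ∀ X₁ X₂ X₃ : Bool,
        (∑ s₁ : Bool, ∑ s₂ : Bool, ∑ s₃ : Bool, ∑ α : Fin 4,
            A₁ s₁ α * A₂ s₂ α α * A₃ s₃ α *
              (phiB s₁ (b2r X₁) * phiB s₂ (b2r X₂) * phiB s₃ (b2r X₃)))
          = b2r (xor X₁ (xor X₂ X₃)) := by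
  refine ⟨fun s => if s then ![0,1,1,0] else ![1,0,0,1],
    fun s => if s then ![1,1,0,0] else ![0,0,1,1],
    fun s => if s then Matrix.diagonal ![1,0,1,0] else Matrix.diagonal ![0,1,0,1],
    rfl, rfl, rfl, rfl, rfl, rfl, ?_⟩
  intro X₁ X₂ X₃
  cases X₁ <;> cases X₂ <;> cases X₃ <;>
    simp [Fin.sum_univ_four, phiB, b2r, Matrix.diagonal]
end

section
/- Every continuous sigmoidal function with limits (0, C), C ≠ 0, is discriminatory with respect to the MPS feature class: let σ : ℝ → ℝ be continuous and bounded with σ(t) → 0 as t → −∞ and σ(t) → C as t → +∞, where C ≠ 0, and let μ be a finite signed regular Borel measure on [0,1]ⁿ. If ∫_{[0,1]ⁿ} σ(λ·p(x) + η) dμ(x) = 0 for every multilinear polynomial p on ℝⁿ and all λ, η ∈ ℝ, then μ = 0. -/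
open MeasureTheory

/-- A multilinear polynomial on `ℝⁿ`: `p(x) = Σ_{s ∈ {0,1}ⁿ} W_s ∏_{i : s i = 1} xᵢ`.
These are exactly the contractions of an MPS whose site kernel maps are
`φ(xᵢ) = (xᵢ, 1)`. -/
def IsMultilinearPoly {n : ℕ} (p : (Fin n → ℝ) → ℝ) : Prop :=
  ∃ W : (Fin n → Bool) → ℝ,
    ∀ x : Fin n → ℝ,
      p x = ∑ s : Fin n → Bool, W s * ∏ i : Fin n, if s i then x i else 1


/-!
For a continuous linear functional `L`, the pushforwards along `L` of the positive and negative
parts of `μ` (restricted to the cube) are finite measures on `ℝ` with equal integrals against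
every `s ↦ σ (λ * s + η)`, since `L` is a multilinear polynomial. As `m → ∞`,
`σ (m * (m * (s - t) + 1))` converges boundedly to `C` times the indicator of `[t, ∞)`, so the
two pushforwards agree on every `[t, ∞)` and hence coincide. By the Cramér–Wold theorem the two
parts of `μ` agree on the cube, and `μ` vanishes off it.
-/

open Filter Set Topology

theorem isMultilinearPoly_linearMap {n : ℕ} (L : (Fin n → ℝ) →ₗ[ℝ] ℝ) :
    IsMultilinearPoly L := by
  classical
  let e : Fin n → Fin n → Bool := fun i j => decide (j = i)
  refine ⟨fun s => ∑ i, if s = e i then L (Pi.single i 1) else 0, fun x => ?_⟩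
  have hmonomial : ∀ i, ∏ j, (if e i j then x j else 1) = x i := fun i => by
    simp [e]
  simp_rw [Finset.sum_mul, ite_mul, zero_mul]
  rw [Finset.sum_comm]
  simp only [Finset.sum_ite_eq', Finset.mem_univ, if_true, hmonomial]
  rw [L.pi_apply_eq_sum_univ]
  refine Finset.sum_congr rfl fun i _ => ?_
  rw [smul_eq_mul, mul_comm]
  congr 2
  ext j
  simp [Pi.single_apply, eq_comm]

namespace MeasureTheory

section Sigmoid

variable {σ : ℝ → ℝ} {C : ℝ}

-- Unlike `m * (s - t) + η`, the argument tends to `+∞` also at `s = t`, so the limit does not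
-- involve the value of `σ` at a finite point.
lemma tendsto_sigmoid_natCast_mul_mul_add_one (hbot : Tendsto σ atBot (𝓝 0))
    (htop : Tendsto σ atTop (𝓝 C)) (t s : ℝ) :
    Tendsto (fun m : ℕ => σ (m * (m * (s - t) + 1))) atTop
      (𝓝 ((Ici t).indicator (fun _ => C) s)) := by
  have hm : Tendsto (fun m : ℕ => (m : ℝ)) atTop atTop := tendsto_natCast_atTop_atTop
  rcases le_or_gt t s with hts | hst
  · rw [indicator_of_mem (mem_Ici.2 hts)]
    refine htop.comp (tendsto_atTop_mono (fun m => ?_) hm)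
    have : (0 : ℝ) ≤ m * (s - t) := mul_nonneg m.cast_nonneg (sub_nonneg.2 hts)
    nlinarith [m.cast_nonneg (α := ℝ)]
  · rw [indicator_of_notMem (notMem_Ici.2 hst)]
    refine hbot.comp (hm.atTop_mul_atBot₀ ?_)
    exact tendsto_atBot_add_const_right _ 1 (hm.atTop_mul_const_of_neg (sub_neg.2 hst))

lemma tendsto_integral_sigmoid_natCast_mul_mul_add_one (hσ : Measurable σ) {M : ℝ}
    (hM : ∀ t, |σ t| ≤ M) (hbot : Tendsto σ atBot (𝓝 0)) (htop : Tendsto σ atTop (𝓝 C))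
    (ρ : Measure ℝ) [IsFiniteMeasure ρ] (t : ℝ) :
    Tendsto (fun m : ℕ => ∫ s, σ (m * (m * (s - t) + 1)) ∂ρ) atTop
      (𝓝 (ρ.real (Ici t) * C)) := by
  rw [← smul_eq_mul, ← integral_indicator_const C measurableSet_Ici]
  refine tendsto_integral_of_dominated_convergence (fun _ => M) (fun m => ?_)
    (integrable_const M) (fun m => .of_forall fun s => hM _)
    (.of_forall (tendsto_sigmoid_natCast_mul_mul_add_one hbot htop t))
  exact (hσ.comp (by fun_prop)).aestronglyMeasurable

theorem Measure.ext_of_integral_sigmoid_eq (hσ : Measurable σ) {M : ℝ}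
    (hM : ∀ t, |σ t| ≤ M) (hC : C ≠ 0) (hbot : Tendsto σ atBot (𝓝 0))
    (htop : Tendsto σ atTop (𝓝 C)) {ρ₁ ρ₂ : Measure ℝ} [IsFiniteMeasure ρ₁] [IsFiniteMeasure ρ₂]
    (h : ∀ lam eta : ℝ, ∫ s, σ (lam * s + eta) ∂ρ₁ = ∫ s, σ (lam * s + eta) ∂ρ₂) :
    ρ₁ = ρ₂ := by
  refine Measure.ext_of_Ici _ _ fun t => ?_
  have h₁ := tendsto_integral_sigmoid_natCast_mul_mul_add_one hσ hM hbot htop ρ₁ t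
  have h₂ := tendsto_integral_sigmoid_natCast_mul_mul_add_one hσ hM hbot htop ρ₂ t
  have hseq : ∀ m : ℕ, ∫ s, σ (m * (m * (s - t) + 1)) ∂ρ₁
      = ∫ s, σ (m * (m * (s - t) + 1)) ∂ρ₂ := by
    intro m
    have affine : ∀ s : ℝ, (m : ℝ) * (m * (s - t) + 1) = m ^ 2 * s + (m - m ^ 2 * t) :=
      fun s => by ring
    simp only [affine, h]
  simp only [hseq] at h₁
  exact (measureReal_eq_measureReal_iff).1 (mul_right_cancel₀ hC (tendsto_nhds_unique h₁ h₂))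

end Sigmoid

theorem Measure.ext_of_map_strongDual {E : Type*} [NormedAddCommGroup E] [NormedSpace ℝ E]
    [CompleteSpace E] [SecondCountableTopology E] [MeasurableSpace E] [BorelSpace E]
    {μ ν : Measure E} [IsFiniteMeasure μ] [IsFiniteMeasure ν]
    (h : ∀ L : StrongDual ℝ E, μ.map L = ν.map L) : μ = ν :=
  Measure.ext_of_charFunDual <| funext fun L => by
    rw [charFunDual_eq_charFun_map_one, charFunDual_eq_charFun_map_one, h L]

theorem SignedMeasure.eq_zero_of_restrict_posPart_eq_negPart {X : Type*} [MeasurableSpace X]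
    {μ : SignedMeasure X} {K : Set X} (hK : MeasurableSet K)
    (hsupp : ∀ A, MeasurableSet A → A ⊆ Kᶜ → μ A = 0)
    (h : μ.toJordanDecomposition.posPart.restrict K = μ.toJordanDecomposition.negPart.restrict K) :
    μ = 0 := by
  ext A hA
  have hAK : μ (A ∩ K) = 0 := by
    rw [μ.apply_eq_posPart_real_sub_negPart_real (hA.inter hK), ← measureReal_restrict_apply hA,
      ← measureReal_restrict_apply hA, h, sub_self]
  have hAKc : μ (A \ K) = 0 := hsupp _ (hA.diff hK) fun x hx => hx.2
  rw [← μ.of_add_of_sdiff (hA.inter hK) hA inter_subset_left, sdiff_self_inter, hAK, hAKc,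
    add_zero, zero_apply]

end MeasureTheory

theorem continuous_sigmoidal_discriminatory_general (n : ℕ) (σ : ℝ → ℝ)
    (hσc : Continuous σ) (hσb : ∃ M, ∀ t, |σ t| ≤ M) (C : ℝ) (hC : C ≠ 0)
    (hbot : Filter.Tendsto σ Filter.atBot (nhds 0))
    (htop : Filter.Tendsto σ Filter.atTop (nhds C))
    (μ : SignedMeasure (Fin n → ℝ))
    (hsupp : ∀ A : Set (Fin n → ℝ), MeasurableSet A →
      A ⊆ (Set.Icc (0 : Fin n → ℝ) 1)ᶜ → μ A = 0)
    (hint : ∀ p : (Fin n → ℝ) → ℝ, IsMultilinearPoly p → ∀ lam eta : ℝ,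
      (∫ x in Set.Icc (0 : Fin n → ℝ) 1, σ (lam * p x + eta)
          ∂μ.toJordanDecomposition.posPart)
        - (∫ x in Set.Icc (0 : Fin n → ℝ) 1, σ (lam * p x + eta)
          ∂μ.toJordanDecomposition.negPart) = 0) :
    μ = 0 := by
  obtain ⟨M, hM⟩ := hσb
  refine SignedMeasure.eq_zero_of_restrict_posPart_eq_negPart measurableSet_Icc hsupp
    (Measure.ext_of_map_strongDual fun L => ?_)
  have hL : Measurable L := L.continuous.measurable
  refine Measure.ext_of_integral_sigmoid_eq hσc.measurable hM hC hbot htop fun lam eta => ?_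
  rw [integral_map hL.aemeasurable (by fun_prop), integral_map hL.aemeasurable (by fun_prop)]
  exact sub_eq_zero.mp (hint L (isMultilinearPoly_linearMap L.toLinearMap) lam eta)

/-- every continuous bounded sigmoidal `σ` with `σ → 0` at `-∞` and
`σ → C ≠ 0` at `+∞` is discriminatory for the MPS feature class: if a finite signed
regular Borel measure `μ` on `[0,1]ⁿ` (realized as a signed measure on `ℝⁿ` vanishing
outside the cube, with regular Jordan parts) satisfies
`∫ σ(λ p(x) + η) dμ(x) = 0` for all multilinear polynomials `p` and all `λ, η ∈ ℝ`,
then `μ = 0`. -/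
theorem continuous_sigmoidal_discriminatory (n : ℕ) (σ : ℝ → ℝ)
    (hσc : Continuous σ) (hσb : ∃ M, ∀ t, |σ t| ≤ M) (C : ℝ) (hC : C ≠ 0)
    (hbot : Filter.Tendsto σ Filter.atBot (nhds 0))
    (htop : Filter.Tendsto σ Filter.atTop (nhds C))
    (μ : SignedMeasure (Fin n → ℝ))
    (hsupp : ∀ A : Set (Fin n → ℝ), MeasurableSet A →
      A ⊆ (Set.Icc (0 : Fin n → ℝ) 1)ᶜ → μ A = 0)
    (hreg₁ : μ.toJordanDecomposition.posPart.Regular)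
    (hreg₂ : μ.toJordanDecomposition.negPart.Regular)
    (hint : ∀ p : (Fin n → ℝ) → ℝ, IsMultilinearPoly p → ∀ lam eta : ℝ,
      (∫ x in Set.Icc (0 : Fin n → ℝ) 1, σ (lam * p x + eta)
          ∂μ.toJordanDecomposition.posPart)
        - (∫ x in Set.Icc (0 : Fin n → ℝ) 1, σ (lam * p x + eta)
          ∂μ.toJordanDecomposition.negPart) = 0) :
    μ = 0 :=
  continuous_sigmoidal_discriminatory_general n σ hσc hσb C hC hbot htop μ hsupp hint
end

section
/- Universal approximation by activated MPS: let σ : ℝ → ℝ be continuous and bounded with σ(t) → 0 as t → −∞ and σ(t) → C as t → +∞, where C ≠ 0. Then the MPS network class M(σ) is dense in C([0,1]ⁿ, ℝ) with respect to the supremum norm: for every continuous f : [0,1]ⁿ → ℝ and every ε > 0 there exist L ∈ ℕ, coefficients c₁,…,c_L ∈ ℝ and multilinear polynomials p₁,…,p_L on ℝⁿ such that sup_{x ∈ [0,1]ⁿ} |Σ_{l=1}^{L} c_l σ(p_l(x)) − f(x)| < ε. -/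
open Filter Finset Set Topology Matrix Submodule

section SpanClosureOn

variable {X : Type*}

def spanClosureOn (K : Set X) (F : Set (X → ℝ)) : Submodule ℝ (X → ℝ) where
  carrier := {g | ∀ ε > 0, ∃ φ ∈ span ℝ F, ∀ x ∈ K, |φ x - g x| ≤ ε}
  zero_mem' ε hε := ⟨0, zero_mem _, fun x _ => by simpa using hε.le⟩
  add_mem' {g₁ g₂} h₁ h₂ ε hε := by
    obtain ⟨φ₁, hφ₁, hg₁⟩ := h₁ (ε / 2) (half_pos hε)
    obtain ⟨φ₂, hφ₂, hg₂⟩ := h₂ (ε / 2) (half_pos hε)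
    refine ⟨φ₁ + φ₂, add_mem hφ₁ hφ₂, fun x hx => ?_⟩
    calc |(φ₁ + φ₂) x - (g₁ + g₂) x| = |(φ₁ x - g₁ x) + (φ₂ x - g₂ x)| := by
          simp only [Pi.add_apply]; ring_nf
      _ ≤ ε / 2 + ε / 2 := (abs_add_le _ _).trans (add_le_add (hg₁ x hx) (hg₂ x hx))
      _ = ε := add_halves ε
  smul_mem' r g h ε hε := by
    obtain ⟨φ, hφ, hg⟩ := h (ε / (|r| + 1)) (by positivity)
    refine ⟨r • φ, smul_mem _ r hφ, fun x hx => ?_⟩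
    calc |(r • φ) x - (r • g) x| = |r| * |φ x - g x| := by
          simp only [Pi.smul_apply, smul_eq_mul, ← mul_sub, abs_mul]
      _ ≤ (|r| + 1) * (ε / (|r| + 1)) := by
          gcongr; exacts [le_add_of_nonneg_right zero_le_one, hg x hx]
      _ = ε := mul_div_cancel₀ ε (by positivity)

variable {K : Set X} {F G : Set (X → ℝ)}

theorem span_le_spanClosureOn : span ℝ F ≤ spanClosureOn K F :=
  fun g hg _ hε => ⟨g, hg, fun x _ => by simpa using hε.le⟩

theorem spanClosureOn_le_of_subset (h : F ⊆ spanClosureOn K G) :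
    spanClosureOn K F ≤ spanClosureOn K G := by
  intro g hg ε hε
  obtain ⟨φ, hφ, hφg⟩ := hg (ε / 2) (half_pos hε)
  obtain ⟨ψ, hψ, hψφ⟩ := span_le.2 h hφ (ε / 2) (half_pos hε)
  refine ⟨ψ, hψ, fun x hx => ?_⟩
  calc |ψ x - g x| ≤ |ψ x - φ x| + |φ x - g x| := abs_sub_le _ _ _
    _ ≤ ε := by linarith [hψφ x hx, hφg x hx]

theorem spanClosureOn_mono (h : F ⊆ G) : spanClosureOn K F ≤ spanClosureOn K G :=
  spanClosureOn_le_of_subset fun _ hf => span_le_spanClosureOn (subset_span (h hf))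

theorem comp_mem_spanClosureOn {Y : Type*} {K' : Set Y} {u : Y → X} (hu : MapsTo u K' K)
    {g : X → ℝ} (hg : g ∈ spanClosureOn K F) :
    g ∘ u ∈ spanClosureOn K' ((· ∘ u) '' F) := by
  intro ε hε
  obtain ⟨φ, hφ, hφg⟩ := hg ε hε
  refine ⟨φ ∘ u, ?_, fun y hy => hφg (u y) (hu hy)⟩
  have := mem_map_of_mem (f := LinearMap.funLeft ℝ ℝ u) hφ
  rwa [map_span] at this

end SpanClosureOn

noncomputable def heaviside (u : ℝ) : ℝ := if 0 ≤ u then 1 else 0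

theorem abs_heaviside_le_one (u : ℝ) : |heaviside u| ≤ 1 := by
  unfold heaviside; split_ifs <;> simp

theorem one_le_abs_natCast_sub_natCast {i j : ℕ} (hij : i ≠ j) : (1 : ℝ) ≤ |(i : ℝ) - j| := by
  have : (1 : ℤ) ≤ |(i : ℤ) - j| := Int.one_le_abs (sub_ne_zero.2 (by exact_mod_cast hij))
  exact_mod_cast this

theorem sum_range_sub_mul_heaviside (g : ℝ → ℝ) {A h t : ℝ} (hh : 0 < h) (hAt : A ≤ t) {N : ℕ}
    (htN : t ≤ A + N * h) :
    ∑ j ∈ range N, (g (A + (j + 1 : ℕ) * h) - g (A + j * h)) * heaviside (t - (A + (j + 1 : ℕ) * h))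
      = g (A + ⌊(t - A) / h⌋₊ * h) - g A := by
  set k := ⌊(t - A) / h⌋₊
  have htA : 0 ≤ (t - A) / h := div_nonneg (sub_nonneg.2 hAt) hh.le
  have hkN : k ≤ N := Nat.floor_le_of_le <| by rw [div_le_iff₀ hh]; linarith
  have hstep : ∀ j : ℕ, heaviside (t - (A + (j + 1 : ℕ) * h)) = if j < k then 1 else 0 := by
    intro j
    have : 0 ≤ t - (A + (j + 1 : ℕ) * h) ↔ j < k := by
      rw [← Nat.add_one_le_iff, Nat.le_floor_iff htA, le_div_iff₀ hh]
      constructor <;> intro <;> linarith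
    simp only [heaviside, this]
  simp only [hstep, mul_ite, mul_one, mul_zero]
  rw [← sum_filter, show (range N).filter (· < k) = range k by ext; simp; omega]
  exact (sum_range_sub (fun j => g (A + j * h)) k).trans (by simp)

theorem exists_heaviside_staircase {g : ℝ → ℝ} {A B : ℝ} (hAB : A < B)
    (hg : ContinuousOn g (Icc A B)) {ε : ℝ} (hε : 0 < ε) :
    ∃ (h : ℝ) (N : ℕ) (s d : ℕ → ℝ), 0 < h ∧ (∀ i j, i ≠ j → h ≤ |s i - s j|) ∧
      (∀ j ∈ range N, |d j| ≤ ε) ∧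
      ∀ t ∈ Icc A B, |∑ j ∈ range N, d j * heaviside (t - s j) - (g t - g A)| ≤ ε := by
  obtain ⟨δ, hδ, hgδ⟩ := Metric.uniformContinuousOn_iff.1
    (isCompact_Icc.uniformContinuousOn_of_continuous hg) ε hε
  obtain ⟨N, hN⟩ := exists_nat_gt ((B - A) / δ)
  have hN0 : (0 : ℝ) < N := (div_pos (sub_pos.2 hAB) hδ).trans hN
  set h := (B - A) / N
  have hh : 0 < h := div_pos (sub_pos.2 hAB) hN0
  have hhδ : h < δ := by
    rw [div_lt_iff₀ hN0]; rwa [div_lt_iff₀ hδ, mul_comm] at hN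
  have hNh : N * h = B - A := mul_div_cancel₀ _ hN0.ne'
  have hx : ∀ j ≤ N, A + j * h ∈ Icc A B := fun j hj => by
    have : (j : ℝ) * h ≤ N * h := by gcongr
    exact ⟨le_add_of_nonneg_right (by positivity), by linarith⟩
  have hgh : ∀ y ∈ Icc A B, ∀ t ∈ Icc A B, |y - t| ≤ h → |g y - g t| ≤ ε := fun y hy t ht hyt =>
    (hgδ y hy t ht (by rw [Real.dist_eq]; exact hyt.trans_lt hhδ)).le
  refine ⟨h, N, fun j => A + (j + 1 : ℕ) * h, fun j => g (A + (j + 1 : ℕ) * h) - g (A + j * h),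
    hh, fun i j hij => ?_, fun j hj => ?_, fun t ht => ?_⟩
  · have : A + (i + 1 : ℕ) * h - (A + (j + 1 : ℕ) * h) = ((i : ℝ) - j) * h := by push_cast; ring
    rw [this, abs_mul, abs_of_pos hh]
    exact le_mul_of_one_le_left hh.le (one_le_abs_natCast_sub_natCast hij)
  · have hj : j + 1 ≤ N := mem_range.1 hj
    refine hgh _ (hx _ hj) _ (hx j (by omega)) (le_of_eq ?_)
    push_cast
    rw [show A + (j + 1) * h - (A + j * h) = h by ring, abs_of_pos hh]
  · rw [sum_range_sub_mul_heaviside g hh ht.1 (by linarith [ht.2]), sub_sub_sub_cancel_right]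
    have htA : 0 ≤ (t - A) / h := div_nonneg (sub_nonneg.2 ht.1) hh.le
    have hk₁ := (le_div_iff₀ hh).1 (Nat.floor_le htA)
    have hk₂ := (div_lt_iff₀ hh).1 (Nat.lt_floor_add_one ((t - A) / h))
    refine hgh _ (hx _ (Nat.floor_le_of_le ?_)) t ht ?_
    · rw [div_le_iff₀ hh]; linarith [ht.2]
    · rw [abs_sub_comm, abs_of_nonneg] <;> linarith

theorem card_filter_abs_sub_lt_le_one {ι : Type*} (S : Finset ι) {s : ι → ℝ} {δ : ℝ}
    (hs : ∀ i j, i ≠ j → 2 * δ ≤ |s i - s j|) (t : ℝ) :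
    #{i ∈ S | |t - s i| < δ} ≤ 1 := by
  refine card_le_one.2 fun i hi j hj => by_contra fun hij => ?_
  have := (hs i j hij).trans (abs_sub_le (s i) t (s j))
  rw [abs_sub_comm] at this
  linarith [(mem_filter.1 hi).2, (mem_filter.1 hj).2]

theorem sum_le_add_card_mul_of_card_filter_le_one {ι : Type*} {S : Finset ι} {f : ι → ℝ}
    (p : ι → Prop) [DecidablePred p] {a b : ℝ} (ha : 0 ≤ a) (hb : 0 ≤ b)
    (hcard : #{i ∈ S | p i} ≤ 1) (hpa : ∀ i ∈ S, f i ≤ a) (hpb : ∀ i ∈ S, ¬ p i → f i ≤ b) :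
    ∑ i ∈ S, f i ≤ a + #S * b := by
  rw [← sum_filter_add_sum_filter_not S p]
  gcongr
  · calc ∑ i ∈ S with p i, f i ≤ #{i ∈ S | p i} • a :=
          sum_le_card_nsmul _ _ _ fun i hi => hpa i (mem_filter.1 hi).1
      _ ≤ 1 • a := nsmul_le_nsmul_left ha hcard
      _ = a := one_nsmul a
  · calc ∑ i ∈ S with ¬ p i, f i ≤ #{i ∈ S | ¬ p i} • b :=
          sum_le_card_nsmul _ _ _ fun i hi => hpb i (mem_filter.1 hi).1 (mem_filter.1 hi).2
      _ ≤ #S • b := nsmul_le_nsmul_left hb (card_filter_le _ _)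
      _ = #S * b := nsmul_eq_mul _ _

section Sigmoid

variable {τ : ℝ → ℝ} {M : ℝ}

theorem exists_forall_abs_comp_mul_sub_heaviside_le (hbot : Tendsto τ atBot (𝓝 0))
    (htop : Tendsto τ atTop (𝓝 1)) {δ η : ℝ} (hδ : 0 < δ) (hη : 0 < η) :
    ∃ c, ∀ u, δ ≤ |u| → |τ (c * u) - heaviside u| ≤ η := by
  obtain ⟨T₁, hT₁⟩ := eventually_atTop.1 (htop.eventually (Metric.closedBall_mem_nhds 1 hη))
  obtain ⟨T₂, hT₂⟩ := eventually_atBot.1 (hbot.eventually (Metric.closedBall_mem_nhds 0 hη))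
  have hc : 0 ≤ (|T₁| + |T₂|) / δ := by positivity
  have hcδ : (|T₁| + |T₂|) / δ * δ = |T₁| + |T₂| := div_mul_cancel₀ _ hδ.ne'
  refine ⟨(|T₁| + |T₂|) / δ, fun u hu => ?_⟩
  rcases le_abs'.1 hu with hu | hu
  · have : (|T₁| + |T₂|) / δ * u ≤ T₂ := by
      nlinarith [neg_abs_le T₂, abs_nonneg T₁, mul_le_mul_of_nonneg_left hu hc]
    simpa [heaviside, (show ¬ 0 ≤ u by linarith), Real.dist_eq] using hT₂ _ this
  · have : T₁ ≤ (|T₁| + |T₂|) / δ * u := by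
      nlinarith [le_abs_self T₁, abs_nonneg T₂, mul_le_mul_of_nonneg_left hu hc]
    simpa [heaviside, hδ.le.trans hu, Real.dist_eq] using hT₁ _ this

/-- Only the node nearest to `t` can lie within `h / 2` of it; at all others the steep sigmoid
is within `1 / (N + 1)` of the step, so the total error is at most `η (M + 1 + N / (N + 1))`. -/
theorem exists_abs_sum_comp_mul_sub_sum_heaviside_le (hM : ∀ t, |τ t| ≤ M)
    (hbot : Tendsto τ atBot (𝓝 0)) (htop : Tendsto τ atTop (𝓝 1)) {h η : ℝ} (hh : 0 < h)
    (hη : 0 ≤ η) {N : ℕ} {s d : ℕ → ℝ} (hs : ∀ i j, i ≠ j → h ≤ |s i - s j|)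
    (hd : ∀ j ∈ range N, |d j| ≤ η) :
    ∃ c, ∀ t, |∑ j ∈ range N, d j * τ (c * (t - s j)) - ∑ j ∈ range N, d j * heaviside (t - s j)|
      ≤ η * (M + 2) := by
  have hM0 : 0 ≤ M := (abs_nonneg _).trans (hM 0)
  obtain ⟨c, hc⟩ := exists_forall_abs_comp_mul_sub_heaviside_le hbot htop (half_pos hh)
    (Nat.one_div_pos_of_nat : 0 < 1 / ((N : ℝ) + 1))
  refine ⟨c, fun t => ?_⟩
  have herr : ∑ j ∈ range N, |τ (c * (t - s j)) - heaviside (t - s j)| ≤ M + 2 := by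
    refine (sum_le_add_card_mul_of_card_filter_le_one (a := M + 1) (b := 1 / ((N : ℝ) + 1))
      (fun j => |t - s j| < h / 2) (by linarith) (by positivity)
      (card_filter_abs_sub_lt_le_one (range N) (fun i j hij => by linarith [hs i j hij]) t)
      (fun j _ => (abs_sub _ _).trans (add_le_add (hM _) (abs_heaviside_le_one _)))
      (fun j _ hj => hc _ (not_lt.1 hj))).trans ?_
    have : (N : ℝ) * (1 / (N + 1)) ≤ 1 := by
      rw [mul_one_div, div_le_one (by positivity)]; linarith
    rw [card_range]; linarith
  calc |∑ j ∈ range N, d j * τ (c * (t - s j)) - ∑ j ∈ range N, d j * heaviside (t - s j)|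
      = |∑ j ∈ range N, d j * (τ (c * (t - s j)) - heaviside (t - s j))| := by
        rw [← sum_sub_distrib]; simp only [mul_sub]
    _ ≤ ∑ j ∈ range N, |d j| * |τ (c * (t - s j)) - heaviside (t - s j)| := by
        simpa only [abs_mul] using abs_sum_le_sum_abs
          (fun j => d j * (τ (c * (t - s j)) - heaviside (t - s j))) (range N)
    _ ≤ ∑ j ∈ range N, η * |τ (c * (t - s j)) - heaviside (t - s j)| := by
        gcongr with j hj; exact hd j hj
    _ ≤ η * (M + 2) := by rw [← mul_sum]; gcongr

theorem mem_spanClosureOn_Icc_comp_affine (hM : ∀ t, |τ t| ≤ M)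
    (hbot : Tendsto τ atBot (𝓝 0)) (htop : Tendsto τ atTop (𝓝 1)) {A B : ℝ} (hAB : A < B)
    {g : ℝ → ℝ} (hg : ContinuousOn g (Icc A B)) :
    g ∈ spanClosureOn (Icc A B) (range fun ab : ℝ × ℝ => fun t => τ (ab.1 * t + ab.2)) := by
  have hM0 : 0 ≤ M := (abs_nonneg _).trans (hM 0)
  have hone : (fun _ => (1 : ℝ)) ∈ spanClosureOn (Icc A B)
      (range fun ab : ℝ × ℝ => fun t => τ (ab.1 * t + ab.2)) := fun ε hε => by
    obtain ⟨T, hT⟩ := (htop.eventually (Metric.closedBall_mem_nhds 1 hε)).exists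
    exact ⟨_, subset_span ⟨(0, T), rfl⟩, fun t _ => by simpa [Real.dist_eq] using hT⟩
  have hincr : (fun t => g t - g A) ∈ spanClosureOn (Icc A B)
      (range fun ab : ℝ × ℝ => fun t => τ (ab.1 * t + ab.2)) := fun ε hε => by
    set η := ε / (M + 3)
    have hη : 0 < η := div_pos hε (by linarith)
    obtain ⟨h, N, s, d, hh, hs, hd, hstair⟩ := exists_heaviside_staircase hAB hg hη
    obtain ⟨c, hc⟩ := exists_abs_sum_comp_mul_sub_sum_heaviside_le hM hbot htop hh hη.le hs hd
    refine ⟨∑ j ∈ range N, d j • fun t => τ (c * t + -(c * s j)),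
      sum_mem fun j _ => smul_mem _ _ (subset_span ⟨(c, -(c * s j)), rfl⟩), fun t ht => ?_⟩
    have hφ : (∑ j ∈ range N, d j • fun t => τ (c * t + -(c * s j))) t
        = ∑ j ∈ range N, d j * τ (c * (t - s j)) := by
      simp only [Finset.sum_apply, Pi.smul_apply, smul_eq_mul, mul_sub, ← sub_eq_add_neg]
    calc |(∑ j ∈ range N, d j • fun t => τ (c * t + -(c * s j))) t - (g t - g A)|
        ≤ |∑ j ∈ range N, d j * τ (c * (t - s j)) - ∑ j ∈ range N, d j * heaviside (t - s j)|
          + |∑ j ∈ range N, d j * heaviside (t - s j) - (g t - g A)| := by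
          rw [hφ]; exact abs_sub_le _ _ _
      _ ≤ η * (M + 2) + η := add_le_add (hc t) (hstair t ht)
      _ = ε := by simp only [η]; field_simp; ring
  have hg_eq : g = g A • (fun _ => (1 : ℝ)) + fun t => g t - g A := by ext; simp
  rw [hg_eq]
  exact add_mem (smul_mem _ _ hone) hincr

end Sigmoid

section ExpDotProduct

variable {ι : Type*} [Fintype ι]

noncomputable def expDotProduct (K : Set (ι → ℝ)) (a : ι → ℝ) : C(K, ℝ) :=
  ⟨fun x => Real.exp (a ⬝ᵥ x.1), by fun_prop⟩

def expDotProducts (K : Set (ι → ℝ)) : Submonoid C(K, ℝ) where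
  carrier := range (expDotProduct K)
  mul_mem' := by
    rintro _ _ ⟨a, rfl⟩ ⟨b, rfl⟩
    exact ⟨a + b, by ext x; simp [expDotProduct, add_dotProduct, Real.exp_add]⟩
  one_mem' := ⟨0, by ext; simp [expDotProduct]⟩

theorem adjoin_expDotProducts_separatesPoints (K : Set (ι → ℝ)) :
    (Algebra.adjoin ℝ (expDotProducts K : Set C(K, ℝ))).SeparatesPoints := by
  classical
  intro x y hxy
  obtain ⟨i, hi⟩ : ∃ i, x.1 i ≠ y.1 i := by
    by_contra! h
    exact hxy (Subtype.ext (funext h))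
  refine ⟨_, ⟨_, Algebra.subset_adjoin ⟨Pi.single i 1, rfl⟩, rfl⟩, ?_⟩
  simpa [expDotProduct, single_dotProduct] using hi

theorem mem_spanClosureOn_exp_dotProduct {K : Set (ι → ℝ)} (hK : IsCompact K) {f : (ι → ℝ) → ℝ}
    (hf : ContinuousOn f K) :
    f ∈ spanClosureOn K (range fun (a x : ι → ℝ) => Real.exp (a ⬝ᵥ x)) := by
  have := isCompact_iff_compactSpace.mp hK
  let f' : C(K, ℝ) := ⟨K.domRestrict f, hf.domRestrict⟩
  have hf' : f' ∈ closure (span ℝ (expDotProducts K : Set C(K, ℝ)) : Set C(K, ℝ)) := by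
    have hE : (Algebra.adjoin ℝ (expDotProducts K : Set C(K, ℝ)) : Set C(K, ℝ))
        = span ℝ (expDotProducts K : Set C(K, ℝ)) := by
      rw [← Subalgebra.coe_toSubmodule, Algebra.adjoin_eq_span, Submonoid.closure_eq]
    rw [← hE, ← Subalgebra.topologicalClosure_coe,
      ContinuousMap.subalgebra_topologicalClosure_eq_top_of_separatesPoints _
        (adjoin_expDotProducts_separatesPoints K)]
    trivial
  intro ε hε
  obtain ⟨φ', hφ', hdist⟩ := Metric.mem_closure_iff.1 hf' ε hε
  -- `φ'` is the restriction to `K` of a combination of the same exponentials on `ι → ℝ`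
  obtain ⟨φ, hφ, hφφ'⟩ : ⇑φ' ∈ (span ℝ (range fun (a x : ι → ℝ) => Real.exp (a ⬝ᵥ x))).map
      (LinearMap.funLeft ℝ ℝ ((↑) : K → ι → ℝ)) := by
    have := mem_map_of_mem (f := ContinuousMap.coeFnLinearMap ℝ) hφ'
    rw [map_span, ← range_comp]
    rwa [map_span, show (expDotProducts K : Set C(K, ℝ)) = range (expDotProduct K) from rfl,
      ← range_comp] at this
  refine ⟨φ, hφ, fun x hx => ?_⟩
  have := ContinuousMap.dist_apply_le_dist (f := f') (g := φ') ⟨x, hx⟩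
  rw [← congrFun hφφ' ⟨x, hx⟩, Real.dist_eq, abs_sub_comm] at this
  exact this.trans hdist.le

end ExpDotProduct

section SigmoidAffine

variable {τ : ℝ → ℝ} {M : ℝ} {ι : Type*} [Fintype ι] {K : Set (ι → ℝ)}

theorem comp_dotProduct_mem_spanClosureOn (hM : ∀ t, |τ t| ≤ M)
    (hbot : Tendsto τ atBot (𝓝 0)) (htop : Tendsto τ atTop (𝓝 1)) (hK : IsCompact K)
    (a : ι → ℝ) {g : ℝ → ℝ} (hg : Continuous g) :
    (fun x => g (a ⬝ᵥ x)) ∈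
      spanClosureOn K (range fun ab : (ι → ℝ) × ℝ => fun x => τ (ab.1 ⬝ᵥ x + ab.2)) := by
  obtain ⟨R, hR⟩ := hK.exists_bound_of_continuousOn
    (f := fun x => a ⬝ᵥ x) (by fun_prop : Continuous fun x : ι → ℝ => a ⬝ᵥ x).continuousOn
  have hmaps : MapsTo (a ⬝ᵥ ·) K (Icc (-(|R| + 1)) (|R| + 1)) := fun x hx =>
    abs_le.1 ((hR x hx).trans (by linarith [le_abs_self R]))
  refine spanClosureOn_mono ?_ (comp_mem_spanClosureOn hmaps
    (mem_spanClosureOn_Icc_comp_affine hM hbot htop (by linarith [abs_nonneg R]) hg.continuousOn))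
  rintro _ ⟨_, ⟨⟨c, b⟩, rfl⟩, rfl⟩
  exact ⟨(c • a, b), by ext x; simp [smul_dotProduct]⟩

theorem mem_spanClosureOn_comp_affine (hM : ∀ t, |τ t| ≤ M)
    (hbot : Tendsto τ atBot (𝓝 0)) (htop : Tendsto τ atTop (𝓝 1)) (hK : IsCompact K)
    {f : (ι → ℝ) → ℝ} (hf : ContinuousOn f K) :
    f ∈ spanClosureOn K (range fun ab : (ι → ℝ) × ℝ => fun x => τ (ab.1 ⬝ᵥ x + ab.2)) :=
  spanClosureOn_le_of_subset
    (by rintro _ ⟨a, rfl⟩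
        exact comp_dotProduct_mem_spanClosureOn hM hbot htop hK a Real.continuous_exp)
    (mem_spanClosureOn_exp_dotProduct hK hf)

end SigmoidAffine

theorem isMultilinearPoly_iff_mem_span {n : ℕ} {p : (Fin n → ℝ) → ℝ} :
    IsMultilinearPoly p ↔
      p ∈ span ℝ (range fun (s : Fin n → Bool) (x : Fin n → ℝ) => ∏ i, if s i then x i else 1) := by
  rw [mem_span_range_iff_exists_fun, IsMultilinearPoly]
  simp only [funext_iff, Finset.sum_apply, Pi.smul_apply, smul_eq_mul, eq_comm]

theorem isMultilinearPoly_dotProduct_add {n : ℕ} (a : Fin n → ℝ) (b : ℝ) :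
    IsMultilinearPoly fun x => a ⬝ᵥ x + b := by
  have : (fun x => a ⬝ᵥ x + b)
      = ∑ i, a i • (fun x : Fin n → ℝ => ∏ j, if decide (j = i) then x j else 1)
        + b • fun x => ∏ j : Fin n, if false then x j else 1 := by
    ext x; simp [dotProduct]
  rw [isMultilinearPoly_iff_mem_span, this]
  exact add_mem (sum_mem fun i _ => smul_mem _ _ (subset_span ⟨_, rfl⟩))
    (smul_mem _ _ (subset_span ⟨_, rfl⟩))

theorem activated_mps_dense_in_continuous_functions_general (n : ℕ) (σ : ℝ → ℝ)
    (hσb : ∃ M, ∀ t, |σ t| ≤ M) (C : ℝ) (hC : C ≠ 0)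
    (hbot : Filter.Tendsto σ Filter.atBot (nhds 0))
    (htop : Filter.Tendsto σ Filter.atTop (nhds C))
    (f : (Fin n → ℝ) → ℝ) (hf : ContinuousOn f (Set.Icc 0 1))
    (ε : ℝ) (hε : 0 < ε) :
    ∃ (L : ℕ) (c : Fin L → ℝ) (p : Fin L → (Fin n → ℝ) → ℝ),
      (∀ l, IsMultilinearPoly (p l)) ∧
      ∀ x ∈ Set.Icc (0 : Fin n → ℝ) 1,
        |(∑ l : Fin L, c l * σ (p l x)) - f x| < ε := by
  obtain ⟨M, hM⟩ := hσb
  have hτ := mem_spanClosureOn_comp_affine (τ := fun t => C⁻¹ * σ t) (M := |C⁻¹| * M)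
    (fun t => by rw [abs_mul]; gcongr; exact hM t) (by simpa using hbot.const_mul C⁻¹)
    (by simpa [hC] using htop.const_mul C⁻¹) isCompact_Icc hf
  have hσ : f ∈ spanClosureOn (Icc 0 1) {φ | ∃ p, IsMultilinearPoly p ∧ φ = fun x => σ (p x)} :=
    spanClosureOn_le_of_subset (by
      rintro _ ⟨⟨a, b⟩, rfl⟩
      exact span_le_spanClosureOn (smul_mem _ C⁻¹
        (subset_span ⟨_, isMultilinearPoly_dotProduct_add a b, rfl⟩))) hτ
  obtain ⟨φ, hφ, hφf⟩ := hσ (ε / 2) (half_pos hε)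
  obtain ⟨L, c, v, rfl⟩ := mem_span_set'.1 hφ
  choose p hp hpv using fun l => (v l).2
  refine ⟨L, c, p, hp, fun x hx => ((le_of_eq ?_).trans (hφf x hx)).trans_lt (half_lt_self hε)⟩
  simp only [Finset.sum_apply, Pi.smul_apply, smul_eq_mul, hpv]

/-- universal approximation by activated MPS. For any continuous bounded
sigmoidal `σ` with `σ → 0` at `-∞` and `σ → C ≠ 0` at `+∞`, the class
`{x ↦ Σ_l c_l σ(p_l x)}` (with `p_l` multilinear polynomials) is dense in
`C([0,1]ⁿ, ℝ)` for the supremum norm. -/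
theorem activated_mps_dense_in_continuous_functions (n : ℕ) (σ : ℝ → ℝ)
    (hσc : Continuous σ) (hσb : ∃ M, ∀ t, |σ t| ≤ M) (C : ℝ) (hC : C ≠ 0)
    (hbot : Filter.Tendsto σ Filter.atBot (nhds 0))
    (htop : Filter.Tendsto σ Filter.atTop (nhds C))
    (f : (Fin n → ℝ) → ℝ) (hf : ContinuousOn f (Set.Icc 0 1))
    (ε : ℝ) (hε : 0 < ε) :
    ∃ (L : ℕ) (c : Fin L → ℝ) (p : Fin L → (Fin n → ℝ) → ℝ),
      (∀ l, IsMultilinearPoly (p l)) ∧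
      ∀ x ∈ Set.Icc (0 : Fin n → ℝ) 1,
        |(∑ l : Fin L, c l * σ (p l x)) - f x| < ε :=
  activated_mps_dense_in_continuous_functions_general n σ hσb C hC hbot htop f hf ε hε
end

section
/- Universal approximation by activated MPS on compact sets: let K ⊆ ℝⁿ be a nonempty compact set and let σ : ℝ → ℝ be continuous and bounded with σ(t) → 0 as t → −∞ and σ(t) → C as t → +∞, where C ≠ 0. Then for every continuous f : K → ℝ and every ε > 0 there exist L ∈ ℕ, coefficients c₁,…,c_L ∈ ℝ and multilinear polynomials p₁,…,p_L on ℝⁿ such that sup_{x ∈ K} |Σ_{l=1}^{L} c_l σ(p_l(x)) − f(x)| < ε. -/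
open Filter Finset Topology

def multilinearMonomial {n : ℕ} (s : Fin n → Bool) (x : Fin n → ℝ) : ℝ :=
  ∏ i, if s i then x i else 1

theorem isMultilinearPoly_iff_mem_span_s17 {n : ℕ} {p : (Fin n → ℝ) → ℝ} :
    IsMultilinearPoly p ↔ p ∈ Submodule.span ℝ (Set.range multilinearMonomial) := by
  simp only [Submodule.mem_span_range_iff_exists_fun, IsMultilinearPoly, funext_iff,
    Finset.sum_apply, Pi.smul_apply, smul_eq_mul, multilinearMonomial, eq_comm]

theorem isMultilinearPoly_dotProduct_add_const {n : ℕ} (w : Fin n → ℝ) (θ : ℝ) :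
    IsMultilinearPoly fun x => w ⬝ᵥ x + θ := by
  have hrepr : (fun x => w ⬝ᵥ x + θ) = ∑ i, w i • multilinearMonomial (fun j => decide (j = i))
      + θ • multilinearMonomial fun _ => false := by
    ext x
    simp [multilinearMonomial, dotProduct]
  rw [isMultilinearPoly_iff_mem_span_s17, hrepr]
  exact add_mem (sum_mem fun i _ => Submodule.smul_mem _ _ (Submodule.subset_span ⟨_, rfl⟩))
    (Submodule.smul_mem _ _ (Submodule.subset_span ⟨_, rfl⟩))

def activatedMPS (σ : ℝ → ℝ) (n : ℕ) : Submodule ℝ ((Fin n → ℝ) → ℝ) :=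
  Submodule.span ℝ ((σ ∘ ·) '' {p | IsMultilinearPoly p})

theorem exists_of_mem_activatedMPS {σ : ℝ → ℝ} {n : ℕ} {v : (Fin n → ℝ) → ℝ}
    (hv : v ∈ activatedMPS σ n) :
    ∃ (L : ℕ) (c : Fin L → ℝ) (p : Fin L → (Fin n → ℝ) → ℝ),
      (∀ l, IsMultilinearPoly (p l)) ∧ v = fun x => ∑ l, c l * σ (p l x) := by
  obtain ⟨L, c, g, rfl⟩ := Submodule.mem_span_set'.mp hv
  choose p hp hpg using fun l => (g l).2
  refine ⟨L, c, p, hp, ?_⟩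
  ext x
  simp [← hpg]

def ridgeSpan (σ : ℝ → ℝ) : Submodule ℝ (ℝ → ℝ) :=
  Submodule.span ℝ (Set.range fun q : ℝ × ℝ => fun t => σ (q.1 * t + q.2))

theorem comp_dotProduct_mem_activatedMPS {σ g : ℝ → ℝ} (hg : g ∈ ridgeSpan σ) {n : ℕ}
    (w : Fin n → ℝ) : (fun x => g (w ⬝ᵥ x)) ∈ activatedMPS σ n := by
  have hmap : (ridgeSpan σ).map (LinearMap.funLeft ℝ ℝ (w ⬝ᵥ ·)) ≤ activatedMPS σ n := by
    rw [ridgeSpan, Submodule.map_span_le]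
    rintro _ ⟨⟨c, θ⟩, rfl⟩
    refine Submodule.subset_span ⟨_, isMultilinearPoly_dotProduct_add_const (c • w) θ, ?_⟩
    ext x
    simp [LinearMap.funLeft, smul_dotProduct]
  exact hmap ⟨g, hg, rfl⟩

theorem const_mem_ridgeSpan {σ : ℝ → ℝ} {θ : ℝ} (hθ : σ θ ≠ 0) (c : ℝ) :
    (fun _ => c) ∈ ridgeSpan σ := by
  have hgen : (fun t => σ (0 * t + θ)) ∈ ridgeSpan σ := Submodule.subset_span ⟨(0, θ), rfl⟩
  convert Submodule.smul_mem _ (c / σ θ) hgen using 1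
  ext t
  simp [hθ]

theorem const_add_sum_mem_ridgeSpan {σ : ℝ → ℝ} {θ : ℝ} (hθ : σ θ ≠ 0) {ι : Type*}
    (s : Finset ι) (b c : ℝ) (w u : ι → ℝ) :
    (fun t => b + ∑ i ∈ s, w i * σ (c * (t - u i))) ∈ ridgeSpan σ := by
  have hgen : ∀ i, (fun t => σ (c * t + -(c * u i))) ∈ ridgeSpan σ :=
    fun i => Submodule.subset_span ⟨(c, -(c * u i)), rfl⟩
  convert add_mem (const_mem_ridgeSpan hθ b)
    (sum_mem fun i (_ : i ∈ s) => Submodule.smul_mem _ (w i) (hgen i)) using 1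
  ext t
  simp [Finset.sum_apply, sub_eq_add_neg, mul_add]

def uniformClosureOn {X : Type*} (S : Set X) (V : Submodule ℝ (X → ℝ)) :
    Submodule ℝ (X → ℝ) where
  carrier := {f | ∀ ε > 0, ∃ v ∈ V, ∀ x ∈ S, |v x - f x| < ε}
  zero_mem' ε hε := ⟨0, V.zero_mem, fun x _ => by simpa using hε⟩
  add_mem' {f g} hf hg ε hε := by
    obtain ⟨u, hu, hfu⟩ := hf (ε / 2) (half_pos hε)
    obtain ⟨v, hv, hgv⟩ := hg (ε / 2) (half_pos hε)
    refine ⟨u + v, V.add_mem hu hv, fun x hx => ?_⟩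
    calc |(u + v) x - (f + g) x| = |(u x - f x) + (v x - g x)| :=
        congrArg abs (by simp only [Pi.add_apply]; ring)
      _ ≤ |u x - f x| + |v x - g x| := abs_add_le _ _
      _ < ε / 2 + ε / 2 := add_lt_add (hfu x hx) (hgv x hx)
      _ = ε := add_halves ε
  smul_mem' c f hf ε hε := by
    obtain ⟨v, hv, hfv⟩ := hf (ε / (|c| + 1)) (by positivity)
    refine ⟨c • v, V.smul_mem c hv, fun x hx => ?_⟩
    calc |(c • v) x - (c • f) x| = |c| * |v x - f x| := by simp [← mul_sub, abs_mul]
      _ ≤ |c| * (ε / (|c| + 1)) := by gcongr; exact (hfv x hx).le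
      _ < ε := by
        rw [mul_div_assoc', div_lt_iff₀ (by positivity)]
        linarith

theorem mem_uniformClosureOn_of_forall_near {X : Type*} {S : Set X} {V : Submodule ℝ (X → ℝ)}
    {f : X → ℝ} (hf : ∀ ε > 0, ∃ g ∈ uniformClosureOn S V, ∀ x ∈ S, |g x - f x| < ε) :
    f ∈ uniformClosureOn S V := by
  intro ε hε
  obtain ⟨g, hg, hgf⟩ := hf (ε / 2) (half_pos hε)
  obtain ⟨v, hv, hvg⟩ := hg (ε / 2) (half_pos hε)
  refine ⟨v, hv, fun x hx => ?_⟩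
  calc |v x - f x| ≤ |v x - g x| + |g x - f x| := abs_sub_le _ _ _
    _ < ε / 2 + ε / 2 := add_lt_add (hvg x hx) (hgf x hx)
    _ = ε := add_halves ε

theorem exists_forall_abs_comp_mul_sub_step_le {σ : ℝ → ℝ} {C : ℝ}
    (hbot : Tendsto σ atBot (𝓝 0)) (htop : Tendsto σ atTop (𝓝 C))
    {η T : ℝ} (hη : 0 < η) (hT : 0 < T) :
    ∃ c, ∀ s, T ≤ |s| → |σ (c * s) - if 0 ≤ s then C else 0| ≤ η := by
  obtain ⟨N₁, hN₁⟩ := eventually_atTop.mp (htop.eventually (Metric.closedBall_mem_nhds C hη))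
  obtain ⟨N₂, hN₂⟩ := eventually_atBot.mp (hbot.eventually (Metric.closedBall_mem_nhds 0 hη))
  have hc : 0 ≤ (|N₁| + |N₂|) / T := by positivity
  have hcT : (|N₁| + |N₂|) / T * T = |N₁| + |N₂| := div_mul_cancel₀ _ hT.ne'
  refine ⟨(|N₁| + |N₂|) / T, fun s hs => ?_⟩
  rcases le_or_gt 0 s with h0 | h0
  · rw [abs_of_nonneg h0] at hs
    have : N₁ ≤ (|N₁| + |N₂|) / T * s := by
      nlinarith [le_abs_self N₁, abs_nonneg N₂, mul_le_mul_of_nonneg_left hs hc]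
    simpa [if_pos h0, ← Real.dist_eq] using hN₁ _ this
  · rw [abs_of_neg h0] at hs
    have : (|N₁| + |N₂|) / T * s ≤ N₂ := by
      nlinarith [neg_abs_le N₂, abs_nonneg N₁, mul_le_mul_of_nonneg_left hs hc]
    simpa [if_neg h0.not_ge] using hN₂ _ this

theorem abs_sum_mul_le_of_good_bad {ι : Type*} {s : Finset ι} {d e : ι → ℝ} {η β : ℝ}
    (bad : ι → Prop) [DecidablePred bad] (hη : 0 ≤ η)
    (hgood : ∀ i ∈ s, ¬ bad i → |e i| ≤ η) (hbad : ∀ i ∈ s, bad i → |d i * e i| ≤ β) :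
    |∑ i ∈ s, d i * e i| ≤ η * ∑ i ∈ s, |d i| + #{i ∈ s | bad i} * β := by
  have hterm : ∀ i ∈ s, |d i * e i| ≤ η * |d i| + if bad i then β else 0 := by
    intro i hi
    by_cases hi' : bad i
    · simpa [hi'] using (hbad i hi hi').trans (le_add_of_nonneg_left (by positivity))
    · simpa [hi', abs_mul, mul_comm η] using
        mul_le_mul_of_nonneg_left (hgood i hi hi') (abs_nonneg (d i))
  calc |∑ i ∈ s, d i * e i| ≤ ∑ i ∈ s, |d i * e i| := abs_sum_le_sum_abs _ _
    _ ≤ ∑ i ∈ s, (η * |d i| + if bad i then β else 0) := sum_le_sum hterm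
    _ = η * ∑ i ∈ s, |d i| + #{i ∈ s | bad i} * β := by
      rw [sum_add_distrib, ← mul_sum, sum_ite, sum_const_zero, add_zero, sum_const,
        nsmul_eq_mul]

theorem card_filter_abs_sub_mul_lt_le_two {T : ℝ} (hT : 0 < T) (x : ℝ) (K : ℕ) :
    #((range K).filter fun k : ℕ => |x - k * T| < T) ≤ 2 := by
  refine (card_le_card fun k hk => ?_).trans (card_le_two (a := ⌊x / T⌋₊) (b := ⌊x / T⌋₊ + 1))
  obtain ⟨hlo, hhi⟩ := abs_lt.mp (mem_filter.mp hk).2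
  have hk₁ : x / T < k + 1 := by rw [div_lt_iff₀ hT]; linarith
  have hk₂ : (k : ℝ) - 1 < x / T := by rw [lt_div_iff₀ hT]; linarith
  have h₁ : ⌊x / T⌋₊ < k + 1 := (Nat.floor_lt' k.succ_ne_zero).mpr (by exact_mod_cast hk₁)
  have h₂ : (k : ℝ) < ⌊x / T⌋₊ + 2 := by linarith [Nat.lt_floor_add_one (x / T)]
  have h₂' : k < ⌊x / T⌋₊ + 2 := by exact_mod_cast h₂
  simp only [mem_insert, mem_singleton]
  omega

theorem sum_range_sub_mul_ite_lt {f : ℕ → ℝ} {m K : ℕ} (hmK : m ≤ K) :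
    ∑ k ∈ range K, (f (k + 1) - f k) * (if k < m then 1 else 0) = f m - f 0 := by
  have hterm : ∀ k, (f (k + 1) - f k) * (if k < m then 1 else 0)
      = if k ∈ range m then f (k + 1) - f k else 0 := fun k => by simp [mem_range]
  simp_rw [hterm]
  rw [sum_ite_mem, range_inter_range, min_eq_right hmK, sum_range_sub]

theorem nonneg_sub_iff_lt_floor {a t T : ℝ} (hT : 0 < T) (hat : a ≤ t) (k : ℕ) :
    0 ≤ t - (a + (k + 1) * T) ↔ k < ⌊(t - a) / T⌋₊ := by
  rw [Nat.lt_iff_add_one_le, Nat.le_floor_iff (div_nonneg (sub_nonneg.mpr hat) hT.le),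
    le_div_iff₀ hT]
  push_cast
  constructor <;> intro <;> linarith

theorem sub_add_floor_mul_mem_Ico {a t T : ℝ} (hT : 0 < T) (hat : a ≤ t) :
    t - (a + ⌊(t - a) / T⌋₊ * T) ∈ Set.Ico 0 T := by
  have hlo := Nat.floor_le (div_nonneg (sub_nonneg.mpr hat) hT.le)
  have hhi := Nat.lt_floor_add_one ((t - a) / T)
  rw [le_div_iff₀ hT] at hlo
  rw [div_lt_iff₀ hT] at hhi
  constructor <;> linarith

theorem exists_grid_near {h : ℝ → ℝ} {a b ε₁ : ℝ} (hab : a ≤ b)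
    (hh : ContinuousOn h (Set.Icc a b)) (hε₁ : 0 < ε₁) :
    ∃ T > 0, (∀ k < ⌊(b - a) / T⌋₊, |h (a + ↑(k + 1) * T) - h (a + k * T)| ≤ ε₁) ∧
      ∀ t ∈ Set.Icc a b, |h (a + ⌊(t - a) / T⌋₊ * T) - h t| < ε₁ := by
  obtain ⟨δ, hδ, hunif⟩ := Metric.uniformContinuousOn_iff.mp
    (isCompact_Icc.uniformContinuousOn_of_continuous hh) ε₁ hε₁
  set T := δ / 2
  have hT : 0 < T := half_pos hδ
  have hTδ : T < δ := half_lt_self hδ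
  have hnode : ∀ k ≤ ⌊(b - a) / T⌋₊, a + k * T ∈ Set.Icc a b := by
    intro k hk
    have hK := Nat.floor_le (div_nonneg (sub_nonneg.mpr hab) hT.le)
    rw [le_div_iff₀ hT] at hK
    have hkK : (k : ℝ) * T ≤ ⌊(b - a) / T⌋₊ * T := by gcongr
    constructor <;> nlinarith
  have hclose : ∀ k ≤ ⌊(b - a) / T⌋₊, ∀ t ∈ Set.Icc a b, |t - (a + k * T)| < δ →
      |h (a + k * T) - h t| < ε₁ := fun k hk t ht hkt => by
    simpa [Real.dist_eq] using hunif _ (hnode k hk) _ ht (by rwa [Real.dist_eq, abs_sub_comm])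
  refine ⟨T, hT, fun k hk => (hclose (k + 1) hk _ (hnode k hk.le) ?_).le, fun t ht => ?_⟩
  · push_cast
    rwa [show a + k * T - (a + (k + 1) * T) = -T by ring, abs_neg, abs_of_pos hT]
  · obtain ⟨h0, hT'⟩ := sub_add_floor_mul_mem_Ico hT ht.1
    refine hclose _ (Nat.floor_le_floor (by gcongr; exact ht.2)) t ht ?_
    rw [abs_of_nonneg h0]
    linarith

-- The jumps within `T` of `t`, at most two, are the only ones the sigmoid does not resolve.
theorem abs_sigma_staircase_sub_le {σ : ℝ → ℝ} {M C : ℝ} (hM : ∀ t, |σ t| ≤ M) (hC : C ≠ 0)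
    {c η T ε₁ : ℝ} (hη : 0 ≤ η) (hT : 0 < T) (hε₁ : 0 ≤ ε₁)
    (hc : ∀ s, T ≤ |s| → |σ (c * s) - if 0 ≤ s then C else 0| ≤ η)
    {f : ℕ → ℝ} {K : ℕ} (hf : ∀ k < K, |f (k + 1) - f k| ≤ ε₁)
    {a t : ℝ} (hat : a ≤ t) (hK : ⌊(t - a) / T⌋₊ ≤ K) :
    |f 0 + ∑ k ∈ range K, (f (k + 1) - f k) / C * σ (c * (t - (a + (k + 1) * T)))
        - f ⌊(t - a) / T⌋₊|
      ≤ η * ∑ k ∈ range K, |(f (k + 1) - f k) / C| + 2 * (ε₁ / |C| * (M + |C|)) := by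
  set d : ℕ → ℝ := fun k => (f (k + 1) - f k) / C
  set e : ℕ → ℝ := fun k => σ (c * (t - (a + (k + 1) * T)))
    - if 0 ≤ t - (a + (k + 1) * T) then C else 0
  have hstair : ∑ k ∈ range K, (f (k + 1) - f k) * (if 0 ≤ t - (a + (k + 1) * T) then 1 else 0)
      = f ⌊(t - a) / T⌋₊ - f 0 := by
    simp_rw [nonneg_sub_iff_lt_floor hT hat]
    exact sum_range_sub_mul_ite_lt hK
  have hsplit : f 0 + ∑ k ∈ range K, d k * σ (c * (t - (a + (k + 1) * T))) - f ⌊(t - a) / T⌋₊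
      = ∑ k ∈ range K, d k * e k := by
    have hjump : ∀ k, d k * σ (c * (t - (a + (k + 1) * T)))
        = d k * e k + (f (k + 1) - f k) * (if 0 ≤ t - (a + (k + 1) * T) then 1 else 0) := by
      intro k
      simp only [d, e]
      split_ifs <;> field_simp <;> ring
    rw [sum_congr rfl fun k _ => hjump k, sum_add_distrib, hstair]
    ring
  rw [hsplit]
  have hcard := card_filter_abs_sub_mul_lt_le_two hT (t - a - T) K
  refine (abs_sum_mul_le_of_good_bad (β := ε₁ / |C| * (M + |C|))
    (fun k : ℕ => |t - a - T - k * T| < T) hη (fun k _ hk => hc _ ?_) (fun k hk _ => ?_)).trans ?_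
  · exact (not_lt.mp hk).trans_eq (congrArg abs (by ring))
  · rw [abs_mul]
    gcongr
    · rw [abs_div]
      gcongr
      exact hf k (mem_range.mp hk)
    · refine (abs_sub _ _).trans (add_le_add (hM _) ?_)
      split_ifs <;> simp
  · have hβ : 0 ≤ ε₁ / |C| * (M + |C|) :=
      mul_nonneg (by positivity) (add_nonneg ((abs_nonneg _).trans (hM 0)) (abs_nonneg C))
    gcongr
    exact_mod_cast hcard

theorem exists_mem_ridgeSpan_near {σ : ℝ → ℝ} {M C : ℝ} (hM : ∀ t, |σ t| ≤ M) (hC : C ≠ 0)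
    (hbot : Tendsto σ atBot (𝓝 0)) (htop : Tendsto σ atTop (𝓝 C))
    {h : ℝ → ℝ} {a b : ℝ} (hh : ContinuousOn h (Set.Icc a b)) {ε : ℝ} (hε : 0 < ε) :
    ∃ g ∈ ridgeSpan σ, ∀ t ∈ Set.Icc a b, |g t - h t| < ε := by
  rcases lt_or_ge b a with hba | hab
  · exact ⟨0, zero_mem _, fun t ht => absurd (ht.1.trans ht.2) hba.not_ge⟩
  have hM0 : 0 ≤ M := (abs_nonneg _).trans (hM 0)
  set ε₁ := ε * |C| / (2 * (2 * (M + |C|) + |C|))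
  have hε₁ : 0 < ε₁ := div_pos (mul_pos hε (abs_pos.mpr hC)) (by positivity)
  obtain ⟨T, hT, hjump, hnear⟩ := exists_grid_near hab hh hε₁
  set f : ℕ → ℝ := fun k => h (a + k * T)
  set D := ∑ k ∈ range ⌊(b - a) / T⌋₊, |(f (k + 1) - f k) / C|
  set η := ε / (2 * (D + 1))
  have hη : 0 < η := by positivity
  obtain ⟨c, hc⟩ := exists_forall_abs_comp_mul_sub_step_le hbot htop hη hT
  obtain ⟨θ, hθ⟩ := (htop.eventually_ne hC).exists
  refine ⟨_, const_add_sum_mem_ridgeSpan hθ (range ⌊(b - a) / T⌋₊) (f 0) c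
    (fun k => (f (k + 1) - f k) / C) (fun k => a + (k + 1) * T), fun t ht => ?_⟩
  have hm : ⌊(t - a) / T⌋₊ ≤ ⌊(b - a) / T⌋₊ := Nat.floor_le_floor (by gcongr; exact ht.2)
  have hstair := abs_sigma_staircase_sub_le hM hC hη.le hT hε₁.le hc (f := f) hjump ht.1 hm
  have hηD : η * D ≤ ε / 2 := by
    rw [div_mul_eq_mul_div, div_le_div_iff₀ (by positivity) two_pos]
    nlinarith [hε, (by positivity : 0 ≤ D)]
  have hε₁C : 2 * (ε₁ / |C| * (M + |C|)) + ε₁ = ε / 2 := by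
    simp only [ε₁]
    field_simp
  calc _ ≤ |_ - f ⌊(t - a) / T⌋₊| + |f ⌊(t - a) / T⌋₊ - h t| := abs_sub_le _ _ _
    _ < ε := by linarith [hnear t ht]

theorem comp_dotProduct_mem_uniformClosureOn {σ : ℝ → ℝ} {M C : ℝ} (hM : ∀ t, |σ t| ≤ M)
    (hC : C ≠ 0) (hbot : Tendsto σ atBot (𝓝 0)) (htop : Tendsto σ atTop (𝓝 C))
    {n : ℕ} {K : Set (Fin n → ℝ)} (hK : IsCompact K) {h : ℝ → ℝ} (hh : Continuous h)
    (w : Fin n → ℝ) : (fun x => h (w ⬝ᵥ x)) ∈ uniformClosureOn K (activatedMPS σ n) := by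
  intro ε hε
  obtain ⟨R, hR⟩ := hK.exists_bound_of_continuousOn (f := fun x => w ⬝ᵥ x) (by fun_prop)
  obtain ⟨g, hg, hgh⟩ :=
    exists_mem_ridgeSpan_near hM hC hbot htop (a := -R) (b := R) hh.continuousOn hε
  exact ⟨_, comp_dotProduct_mem_activatedMPS hg w, fun x hx => hgh _ (abs_le.mp (hR x hx))⟩

noncomputable def expDotHom (n : ℕ) : Multiplicative (Fin n → ℝ) →* C(Fin n → ℝ, ℝ) where
  toFun w := ⟨fun x => Real.exp (w.toAdd ⬝ᵥ x), by fun_prop⟩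
  map_one' := by ext x; simp
  map_mul' w w' := by ext x; simp [add_dotProduct, Real.exp_add]

theorem separatesPoints_adjoin_expDot (n : ℕ) :
    (Algebra.adjoin ℝ (MonoidHom.mrange (expDotHom n) : Set C(Fin n → ℝ, ℝ))).SeparatesPoints := by
  intro x y hxy
  obtain ⟨i, hi⟩ := Function.ne_iff.mp hxy
  refine ⟨_, ⟨_, Algebra.subset_adjoin ⟨Multiplicative.ofAdd (Pi.single i 1), rfl⟩, rfl⟩, ?_⟩
  simpa [expDotHom, single_dotProduct] using hi

theorem mem_uniformClosureOn_activatedMPS {σ : ℝ → ℝ} {M C : ℝ} (hM : ∀ t, |σ t| ≤ M)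
    (hC : C ≠ 0) (hbot : Tendsto σ atBot (𝓝 0)) (htop : Tendsto σ atTop (𝓝 C))
    {n : ℕ} {K : Set (Fin n → ℝ)} (hK : IsCompact K) {f : (Fin n → ℝ) → ℝ}
    (hf : ContinuousOn f K) : f ∈ uniformClosureOn K (activatedMPS σ n) := by
  obtain ⟨F, hF⟩ := ContinuousMap.exists_restrict_eq hK.isClosed ⟨K.domRestrict f, hf.domRestrict⟩
  have hA : Subalgebra.toSubmodule (Algebra.adjoin ℝ (MonoidHom.mrange (expDotHom n) : Set _))
      ≤ (uniformClosureOn K (activatedMPS σ n)).comap (ContinuousMap.coeFnLinearMap ℝ) := by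
    rw [Algebra.adjoin_eq_span, Submonoid.closure_eq, Submodule.span_le]
    rintro _ ⟨w, rfl⟩
    exact comp_dotProduct_mem_uniformClosureOn hM hC hbot htop hK Real.continuous_exp w.toAdd
  refine mem_uniformClosureOn_of_forall_near fun ε hε => ?_
  obtain ⟨g, hg, hgF⟩ :=
    ContinuousMap.exists_mem_subalgebra_near_continuous_of_isCompact_of_separatesPoints
      (separatesPoints_adjoin_expDot n) F hK hε
  refine ⟨g, hA hg, fun x hx => ?_⟩
  have hFx : F x = f x := DFunLike.congr_fun hF ⟨x, hx⟩
  simpa [hFx] using hgF x hx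

theorem activated_mps_dense_on_compact_general (n : ℕ) (K : Set (Fin n → ℝ))
    (hK : IsCompact K) (σ : ℝ → ℝ)
    (hσb : ∃ M, ∀ t, |σ t| ≤ M) (C : ℝ) (hC : C ≠ 0)
    (hbot : Filter.Tendsto σ Filter.atBot (nhds 0))
    (htop : Filter.Tendsto σ Filter.atTop (nhds C))
    (f : (Fin n → ℝ) → ℝ) (hf : ContinuousOn f K)
    (ε : ℝ) (hε : 0 < ε) :
    ∃ (L : ℕ) (c : Fin L → ℝ) (p : Fin L → (Fin n → ℝ) → ℝ),
      (∀ l, IsMultilinearPoly (p l)) ∧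
      ∀ x ∈ K, |(∑ l : Fin L, c l * σ (p l x)) - f x| < ε := by
  obtain ⟨M, hM⟩ := hσb
  obtain ⟨v, hv, hvf⟩ := mem_uniformClosureOn_activatedMPS hM hC hbot htop hK hf ε hε
  obtain ⟨L, c, p, hp, rfl⟩ := exists_of_mem_activatedMPS hv
  exact ⟨L, c, p, hp, hvf⟩

/-- universal approximation by activated MPS on compact sets. For any
nonempty compact `K ⊆ ℝⁿ` and any continuous bounded sigmoidal `σ` with `σ → 0` at `-∞`
and `σ → C ≠ 0` at `+∞`, every continuous `f : K → ℝ` is uniformly approximated within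
`ε` by some `x ↦ Σ_l c_l σ(p_l x)` with `p_l` multilinear polynomials. -/
theorem activated_mps_dense_on_compact (n : ℕ) (K : Set (Fin n → ℝ))
    (hK : IsCompact K) (hKne : K.Nonempty) (σ : ℝ → ℝ)
    (hσc : Continuous σ) (hσb : ∃ M, ∀ t, |σ t| ≤ M) (C : ℝ) (hC : C ≠ 0)
    (hbot : Filter.Tendsto σ Filter.atBot (nhds 0))
    (htop : Filter.Tendsto σ Filter.atTop (nhds C))
    (f : (Fin n → ℝ) → ℝ) (hf : ContinuousOn f K)
    (ε : ℝ) (hε : 0 < ε) :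
    ∃ (L : ℕ) (c : Fin L → ℝ) (p : Fin L → (Fin n → ℝ) → ℝ),
      (∀ l, IsMultilinearPoly (p l)) ∧
      ∀ x ∈ K, |(∑ l : Fin L, c l * σ (p l x)) - f x| < ε :=
  activated_mps_dense_on_compact_general n K hK σ hσb C hC hbot htop f hf ε hε
end
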